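/- arXiv:1711.06169 — 7 statements merged into one kernel-verified Lean document; each statement's English description precedes it below -/
import Mathlib

section
/- Let C be an additive category with set-indexed coproducts, let M ∈ C, and let f: M' → M'' be a morphism between objects of Add(M). Let X be the set of all morphisms g: M → M' with f ∘ g = 0, and let k: M^(X) → M' be the morphism whose component indexed by g ∈ X equals g. Then k is a weak kernel of f in Add(M): one has f ∘ k = 0, and every morphism h: N → M' with N ∈ Add(M) and f ∘ h = 0 factors through k. In particular, the additive category Add(M) has weak kernels. -/
open CategoryTheory Limits Abelian

universe w v u

section Defs

variable {A : Type u} [Category.{v} A]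

/-- `X` is an object of `Add T`: a direct summand of a set-indexed coproduct of copies of `T`. -/
def IsAddObj [HasCoproducts.{v} A] (T X : A) : Prop :=
  ∃ (I : Type v) (s : X ⟶ ∐ (fun _ : I => T)) (r : (∐ (fun _ : I => T)) ⟶ X),
    s ≫ r = 𝟙 X

/-- `X` is an object of `Prod W`: a direct summand of a set-indexed product of copies of `W`. -/
def IsProdObj [HasProducts.{v} A] (W X : A) : Prop :=
  ∃ (I : Type v) (s : X ⟶ ∏ᶜ (fun _ : I => W)) (r : (∏ᶜ (fun _ : I => W)) ⟶ X),
    s ≫ r = 𝟙 X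

/-- An injective cogenerator. -/
def IsInjectiveCogenerator [HasProducts.{v} A] (J : A) : Prop :=
  Injective J ∧ ∀ X : A, ∃ (I : Type v) (f : X ⟶ ∏ᶜ (fun _ : I => J)), Mono f

/-- A projective generator. -/
def IsProjectiveGenerator [HasCoproducts.{v} A] (P : A) : Prop :=
  Projective P ∧ ∀ X : A, ∃ (I : Type v) (f : (∐ fun _ : I => P) ⟶ X), Epi f

variable [Abelian A]

/-- The data of an `Add T`-resolution `⋯ → T₁ → T₀ → E → 0` which is exact and stays exact
after applying `Hom(T, −)`. -/
structure AddResolution [HasCoproducts.{v} A] (T E : A) where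
  Tobj : ℕ → A
  d : ∀ n, Tobj (n + 1) ⟶ Tobj n
  ε : Tobj 0 ⟶ E
  add : ∀ n, IsAddObj T (Tobj n)
  epi : Epi ε
  w0 : d 0 ≫ ε = 0
  w : ∀ n, d (n + 1) ≫ d n = 0
  exact0 : (ShortComplex.mk (d 0) ε w0).Exact
  exact : ∀ n, (ShortComplex.mk (d (n + 1)) (d n) (w n)).Exact
  homSurj : ∀ g : T ⟶ E, ∃ h : T ⟶ Tobj 0, h ≫ ε = g
  homExact0 : ∀ g : T ⟶ Tobj 0, g ≫ ε = 0 → ∃ h : T ⟶ Tobj 1, h ≫ d 0 = g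
  homExact : ∀ (n : ℕ) (g : T ⟶ Tobj (n + 1)), g ≫ d n = 0 →
    ∃ h : T ⟶ Tobj (n + 2), h ≫ d (n + 1) = g

/-- The data of a `Prod W`-coresolution `0 → F → W⁰ → W¹ → ⋯` which is exact and stays exact
after applying `Hom(−, W)`. -/
structure ProdCoresolution [HasProducts.{v} A] (W F : A) where
  Wobj : ℕ → A
  d : ∀ n, Wobj n ⟶ Wobj (n + 1)
  ι : F ⟶ Wobj 0
  prd : ∀ n, IsProdObj W (Wobj n)
  mono : Mono ι
  w0 : ι ≫ d 0 = 0
  w : ∀ n, d n ≫ d (n + 1) = 0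
  exact0 : (ShortComplex.mk ι (d 0) w0).Exact
  exact : ∀ n, (ShortComplex.mk (d n) (d (n + 1)) (w n)).Exact
  homSurj : ∀ g : F ⟶ W, ∃ h : Wobj 0 ⟶ W, ι ≫ h = g
  homExact0 : ∀ g : Wobj 0 ⟶ W, ι ≫ g = 0 → ∃ h : Wobj 1 ⟶ W, d 0 ≫ h = g
  homExact : ∀ (n : ℕ) (g : Wobj (n + 1) ⟶ W), d n ≫ g = 0 →
    ∃ h : Wobj (n + 2) ⟶ W, d (n + 1) ≫ h = g

variable [HasExt.{w} A]

/-- A weakly tilting object. -/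
def IsWeaklyTilting [HasCoproducts.{v} A] (T : A) : Prop :=
  ∀ (I : Type v) (i : ℕ), 0 < i → Subsingleton (Ext.{w} T (∐ fun _ : I => T) i)

/-- A weakly cotilting object. -/
def IsWeaklyCotilting [HasProducts.{v} A] (W : A) : Prop :=
  ∀ (I : Type v) (i : ℕ), 0 < i → Subsingleton (Ext.{w} (∏ᶜ fun _ : I => W) W i)

/-- Membership in the class `E_max(T)`. -/
def InEMax [HasCoproducts.{v} A] (T E : A) : Prop :=
  (∀ i : ℕ, 0 < i → Subsingleton (Ext.{w} T E i)) ∧ Nonempty (AddResolution T E)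

/-- Membership in the class `F_max(W)`. -/
def InFMax [HasProducts.{v} A] (W F : A) : Prop :=
  (∀ i : ℕ, 0 < i → Subsingleton (Ext.{w} F W i)) ∧ Nonempty (ProdCoresolution W F)

/-- An `∞`-tilting object. -/
def IsInfTilting [HasCoproducts.{v} A] (T : A) : Prop :=
  IsWeaklyTilting.{w} T ∧ ∀ J : A, Injective J → InEMax.{w} T J

/-- An `∞`-cotilting object. -/
def IsInfCotilting [HasProducts.{v} A] (W : A) : Prop :=
  IsWeaklyCotilting.{w} W ∧ ∀ P : A, Projective P → InFMax.{w} W P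

/-- An `∞`-tilting pair `(T, E)`. -/
def IsTiltingPair [HasCoproducts.{v} A] (T : A) (E : Set A) : Prop :=
  (∀ J : A, Injective J → J ∈ E) ∧
  (∀ X : A, IsAddObj T X → X ∈ E) ∧
  (∀ X ∈ E, Subsingleton (Ext.{w} T X 1)) ∧
  (∀ S : ShortComplex A, S.ShortExact → S.X₁ ∈ E → S.X₂ ∈ E → S.X₃ ∈ E) ∧
  (∀ S : ShortComplex A, S.ShortExact → S.X₁ ∈ E → S.X₃ ∈ E → S.X₂ ∈ E) ∧
  (∀ X ∈ E, ∀ (T' : A), IsAddObj T T' → ∀ t : T' ⟶ X,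
    (∀ (T'' : A), IsAddObj T T'' → ∀ h : T'' ⟶ X, ∃ g : T'' ⟶ T', g ≫ t = h) →
    Epi t ∧ kernel t ∈ E)

/-- An `∞`-cotilting pair `(W, F)`. -/
def IsCotiltingPair [HasProducts.{v} A] (W : A) (F : Set A) : Prop :=
  (∀ P : A, Projective P → P ∈ F) ∧
  (∀ X : A, IsProdObj W X → X ∈ F) ∧
  (∀ X ∈ F, Subsingleton (Ext.{w} X W 1)) ∧
  (∀ S : ShortComplex A, S.ShortExact → S.X₂ ∈ F → S.X₃ ∈ F → S.X₁ ∈ F) ∧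
  (∀ S : ShortComplex A, S.ShortExact → S.X₁ ∈ F → S.X₃ ∈ F → S.X₂ ∈ F) ∧
  (∀ X ∈ F, ∀ (W' : A), IsProdObj W W' → ∀ t : X ⟶ W',
    (∀ (W'' : A), IsProdObj W W'' → ∀ h : X ⟶ W'', ∃ g : W' ⟶ W'', t ≫ g = h) →
    Mono t ∧ cokernel t ∈ F)

end Defs

/-- The natural morphism `M^(X) → M'`, where `X` is the set of morphisms
`M → M'` killed by `f`, is a weak kernel of `f : M' → M''` in `Add(M)`.  In particular,
`Add(M)` has weak kernels. -/
theorem stmt2 (C : Type u) [Category.{v} C] [Preadditive C] [HasCoproducts.{v} C]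
    (M M' M'' : C) (hM' : IsAddObj M M') (hM'' : IsAddObj M M'') (f : M' ⟶ M'') :
    IsAddObj M (∐ (fun _ : {g : M ⟶ M' // g ≫ f = 0} => M)) ∧
    (Sigma.desc (fun g : {g : M ⟶ M' // g ≫ f = 0} => g.1)) ≫ f = 0 ∧
    (∀ (N : C), IsAddObj M N → ∀ h : N ⟶ M', h ≫ f = 0 →
      ∃ u : N ⟶ ∐ (fun _ : {g : M ⟶ M' // g ≫ f = 0} => M),
        u ≫ Sigma.desc (fun g : {g : M ⟶ M' // g ≫ f = 0} => g.1) = h) := by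
  refine ⟨⟨{g : M ⟶ M' // g ≫ f = 0}, 𝟙 _, 𝟙 _, by simp⟩, ?_, ?_⟩
  · ext g
    simp [g.2]
  · rintro N ⟨I, s, r, hsr⟩ h hf
    refine ⟨s ≫ Sigma.desc (fun i => Sigma.ι (fun _ : {g : M ⟶ M' // g ≫ f = 0} => M)
      ⟨Sigma.ι (fun _ : I => M) i ≫ r ≫ h, by simp [hf]⟩), ?_⟩
    have : (Sigma.desc (fun i => Sigma.ι (fun _ : {g : M ⟶ M' // g ≫ f = 0} => M)
        ⟨Sigma.ι (fun _ : I => M) i ≫ r ≫ h, by simp [hf]⟩)) ≫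
        Sigma.desc (fun g : {g : M ⟶ M' // g ≫ f = 0} => g.1) = r ≫ h := by
      ext i
      simp
    rw [Category.assoc, this, ← Category.assoc, hsr, Category.id_comp]
end

section
/- Let A be an abelian category with set-indexed coproducts and let T ∈ A be a weakly tilting object. Then the full subcategory E_max(T) ⊆ A is closed under direct summands: if E' and E'' are objects of A such that E' ⊕ E'' ∈ E_max(T), then E' ∈ E_max(T) and E'' ∈ E_max(T). -/
open CategoryTheory Limits Abelian

universe w v u

section Stmt6Proof

open ZeroObject

namespace Stmt6Proof

variable {A : Type u} [Category.{v} A] [Abelian A] [HasCoproducts.{v} A]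

lemma lift_of_addObj (T : A) {C X Y : A} (hC : IsAddObj T C) (p : X ⟶ Y)
    (hp : ∀ g : T ⟶ Y, ∃ h : T ⟶ X, h ≫ p = g) (u : C ⟶ Y) :
    ∃ t : C ⟶ X, t ≫ p = u := by
  obtain ⟨I, s, r, hsr⟩ := hC
  choose h hh using fun i : I => hp (Sigma.ι (fun _ : I => T) i ≫ r ≫ u)
  refine ⟨s ≫ Sigma.desc h, ?_⟩
  have key : (Sigma.desc h) ≫ p = r ≫ u := by
    ext i
    simp [hh]
  rw [Category.assoc, key, ← Category.assoc, hsr, Category.id_comp]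

lemma isAddObj_biprod (T : A) {X Y : A} (hX : IsAddObj T X) (hY : IsAddObj T Y) :
    IsAddObj T (X ⊞ Y) := by
  obtain ⟨I, sI, rI, hI⟩ := hX
  obtain ⟨J, sJ, rJ, hJ⟩ := hY
  refine ⟨I ⊕ J,
    biprod.desc (sI ≫ Sigma.desc fun i => Sigma.ι (fun _ : I ⊕ J => T) (Sum.inl i))
      (sJ ≫ Sigma.desc fun j => Sigma.ι (fun _ : I ⊕ J => T) (Sum.inr j)),
    Sigma.desc (Sum.elim (fun i => Sigma.ι (fun _ : I => T) i ≫ rI ≫ biprod.inl)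
      (fun j => Sigma.ι (fun _ : J => T) j ≫ rJ ≫ biprod.inr)), ?_⟩
  have h1 : (Sigma.desc fun i => Sigma.ι (fun _ : I ⊕ J => T) (Sum.inl i)) ≫
      Sigma.desc (Sum.elim (fun i => Sigma.ι (fun _ : I => T) i ≫ rI ≫ biprod.inl)
      (fun j => Sigma.ι (fun _ : J => T) j ≫ rJ ≫ biprod.inr)) = rI ≫ biprod.inl := by
    apply Sigma.hom_ext; intro i; simp
  have h2 : (Sigma.desc fun j => Sigma.ι (fun _ : I ⊕ J => T) (Sum.inr j)) ≫
      Sigma.desc (Sum.elim (fun i => Sigma.ι (fun _ : I => T) i ≫ rI ≫ biprod.inl)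
      (fun j => Sigma.ι (fun _ : J => T) j ≫ rJ ≫ biprod.inr)) = rJ ≫ biprod.inr := by
    apply Sigma.hom_ext; intro j; simp
  apply biprod.hom_ext' <;> simp [h1, h2, reassoc_of% hI, reassoc_of% hJ]

lemma comp_desc {W X Y Z : A} (u : W ⟶ X ⊞ Y) (a : X ⟶ Z) (b : Y ⟶ Z) :
    u ≫ biprod.desc a b = u ≫ biprod.fst ≫ a + u ≫ biprod.snd ≫ b := by
  rw [biprod.desc_eq, Preadditive.comp_add]

/-- A resolution presented as a chain of short exact sequences
`0 ⟶ K (n+1) ⟶ C n ⟶ K n ⟶ 0` with `K 0 ≅ E`, all `C n ∈ Add T`,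
and `Hom(T, f n)` surjective. -/
structure SyzChain (T E : A) where
  K : ℕ → A
  C : ℕ → A
  iso0 : K 0 ≅ E
  f : ∀ n, C n ⟶ K n
  i : ∀ n, K (n + 1) ⟶ C n
  add : ∀ n, IsAddObj T (C n)
  epif : ∀ n, Epi (f n)
  monoi : ∀ n, Mono (i n)
  wif : ∀ n, i n ≫ f n = 0
  exacti : ∀ n, (ShortComplex.mk (i n) (f n) (wif n)).Exact
  surj : ∀ n (g : T ⟶ K n), ∃ h : T ⟶ C n, h ≫ f n = g

variable {T E : A}

/-- Transport a syzygy chain along an isomorphism. -/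
noncomputable def chainIso {F : A} (S : SyzChain T E) (e : E ≅ F) : SyzChain T F :=
  { S with iso0 := S.iso0 ≪≫ e }

/-- Output of one step of the two-sided syzygy construction. -/
structure StepData (S : SyzChain T E) (m : ℕ) {X' X'' C' C'' : A}
    (f' : C' ⟶ X') (f'' : C'' ⟶ X'') where
  f : S.C m ⊞ C'' ⟶ kernel f'
  epi : Epi f
  surj : ∀ g : T ⟶ kernel f', ∃ h, h ≫ f = g
  i : S.K (m + 1) ⟶ kernel f
  p : kernel f ⟶ kernel f''
  zero : i ≫ p = 0
  mono : Mono i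
  ex : (ShortComplex.mk i p zero).Exact
  psurj : ∀ g : T ⟶ kernel f'', ∃ h : T ⟶ kernel f, h ≫ p = g

noncomputable def step (S : SyzChain T E) (m : ℕ) {X' X'' C' C'' : A}
    (f' : C' ⟶ X') (f'' : C'' ⟶ X'')
    (add'' : IsAddObj T C'') (epi'' : Epi f'')
    (surj'' : ∀ g : T ⟶ X'', ∃ h, h ≫ f'' = g)
    (i' : S.K m ⟶ kernel f') (p' : kernel f' ⟶ X'')
    (mono' : Mono i') (zero' : i' ≫ p' = 0)
    (ex' : (ShortComplex.mk i' p' zero').Exact)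
    (psurj' : ∀ g : T ⟶ X'', ∃ h : T ⟶ kernel f', h ≫ p' = g) :
    StepData S m f' f'' := by
  haveI := mono'
  haveI : Mono (ShortComplex.mk i' p' zero').f := mono'
  let t : C'' ⟶ kernel f' := (lift_of_addObj T add'' p' psurj' f'').choose
  have ht : t ≫ p' = f'' := (lift_of_addObj T add'' p' psurj' f'').choose_spec
  let f : S.C m ⊞ C'' ⟶ kernel f' := biprod.desc (S.f m ≫ i') t
  have hf : f = biprod.desc (S.f m ≫ i') t := rfl
  have hinl : biprod.inl ≫ f = S.f m ≫ i' := biprod.inl_desc _ _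
  have hinr : biprod.inr ≫ f = t := biprod.inr_desc _ _
  have hw1 : (S.i m ≫ biprod.inl) ≫ f = 0 := by
    rw [Category.assoc, hinl, ← Category.assoc, S.wif m, zero_comp]
  have hw2 : (kernel.ι f ≫ biprod.snd) ≫ f'' = 0 := by
    have e1 : kernel.ι f ≫ biprod.fst ≫ (S.f m ≫ i') + kernel.ι f ≫ biprod.snd ≫ t = 0 := by
      rw [← comp_desc]; exact kernel.condition f
    have e2 : kernel.ι f ≫ biprod.snd ≫ t =
        -(kernel.ι f ≫ biprod.fst ≫ (S.f m ≫ i')) := eq_neg_of_add_eq_zero_right e1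
    have e3 : (kernel.ι f ≫ biprod.snd ≫ t) ≫ p' = 0 := by
      rw [e2]; simp [zero']
    rw [← ht]
    simpa using e3
  have hepi : Epi f := by
    rw [epi_iff_surjective_up_to_refinements]
    intro B y
    obtain ⟨B₁, π₁, hπ₁, c'', hc''⟩ := surjective_up_to_refinements_of_epi f'' (y ≫ p')
    have h2 : (π₁ ≫ y - c'' ≫ t) ≫ p' = 0 := by
      simp only [Preadditive.sub_comp, Category.assoc, ht]
      rw [hc'', sub_self]
    obtain ⟨B₂, π₂, hπ₂, k, hk⟩ := ex'.exact_up_to_refinements _ h2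
    haveI := S.epif m
    obtain ⟨B₃, π₃, hπ₃, c', hc'⟩ := surjective_up_to_refinements_of_epi (S.f m) k
    haveI := hπ₁; haveI := hπ₂; haveI := hπ₃
    refine ⟨B₃, π₃ ≫ π₂ ≫ π₁, inferInstance, biprod.lift c' (π₃ ≫ π₂ ≫ c''), ?_⟩
    have hk' : π₂ ≫ π₁ ≫ y = k ≫ i' + π₂ ≫ c'' ≫ t := by
      have h3 := hk
      rw [Preadditive.comp_sub, sub_eq_iff_eq_add] at h3
      simpa using h3
    calc (π₃ ≫ π₂ ≫ π₁) ≫ y = π₃ ≫ (π₂ ≫ π₁ ≫ y) := by simp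
      _ = π₃ ≫ (k ≫ i' + π₂ ≫ c'' ≫ t) := by rw [hk']
      _ = (π₃ ≫ k) ≫ i' + (π₃ ≫ π₂ ≫ c'') ≫ t := by
          simp [Preadditive.comp_add]
      _ = (c' ≫ S.f m) ≫ i' + (π₃ ≫ π₂ ≫ c'') ≫ t := by rw [hc']
      _ = biprod.lift c' (π₃ ≫ π₂ ≫ c'') ≫ f := by
          rw [hf, biprod.lift_desc]; simp
  have hsurj : ∀ g : T ⟶ kernel f', ∃ h, h ≫ f = g := by
    intro g
    obtain ⟨a, ha⟩ := surj'' (g ≫ p')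
    have h2 : (g - a ≫ t) ≫ p' = 0 := by
      rw [Preadditive.sub_comp, Category.assoc, ht, ha, sub_self]
    obtain ⟨k, hk⟩ := ex'.lift' _ h2
    obtain ⟨c, hc⟩ := S.surj m k
    refine ⟨biprod.lift c a, ?_⟩
    rw [hf, biprod.lift_desc, ← Category.assoc, hc, hk]
    abel
  refine { f := f, epi := hepi, surj := hsurj,
           i := kernel.lift f (S.i m ≫ biprod.inl) hw1,
           p := kernel.lift f'' (kernel.ι f ≫ biprod.snd) hw2,
           zero := ?_, mono := ?_, ex := ?_, psurj := ?_ }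
  · rw [← cancel_mono (kernel.ι f'')]
    simp [kernel.lift_ι_assoc]
  · have hfac : kernel.lift f (S.i m ≫ biprod.inl) hw1 ≫ (kernel.ι f ≫ biprod.fst)
        = S.i m := by simp [kernel.lift_ι_assoc]
    haveI := S.monoi m
    exact mono_of_mono_fac hfac
  · rw [ShortComplex.exact_iff_exact_up_to_refinements]
    intro B x₂ hx₂
    have hx₂' : x₂ ≫ kernel.lift f'' (kernel.ι f ≫ biprod.snd) hw2 = 0 := hx₂
    have h1 : x₂ ≫ kernel.ι f ≫ biprod.snd = 0 := by
      simpa using hx₂' =≫ kernel.ι f''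
    have htot : x₂ ≫ kernel.ι f ≫ biprod.fst ≫ biprod.inl
        + x₂ ≫ kernel.ι f ≫ biprod.snd ≫ biprod.inr = x₂ ≫ kernel.ι f := by
      rw [← Preadditive.comp_add, ← Preadditive.comp_add, biprod.total, Category.comp_id]
    have hz : x₂ ≫ kernel.ι f ≫ biprod.snd ≫ (biprod.inr : C'' ⟶ S.C m ⊞ C'') = 0 := by
      have h4 := h1 =≫ (biprod.inr : C'' ⟶ S.C m ⊞ C'')
      simpa using h4
    have hufst : x₂ ≫ kernel.ι f ≫ biprod.fst ≫ biprod.inl = x₂ ≫ kernel.ι f := by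
      rw [← htot, hz, add_zero]
    have h2 : (x₂ ≫ kernel.ι f ≫ biprod.fst) ≫ S.f m = 0 := by
      rw [← cancel_mono i']
      simp only [Category.assoc, zero_comp]
      rw [← hinl]
      have h4 := hufst =≫ f
      simp only [Category.assoc] at h4
      rw [h4]
      simp
    obtain ⟨B', π, hπ, k, hk⟩ := (S.exacti m).exact_up_to_refinements _ h2
    refine ⟨B', π, hπ, k, ?_⟩
    show π ≫ x₂ = k ≫ kernel.lift f (S.i m ≫ biprod.inl) hw1
    rw [← cancel_mono (kernel.ι f)]
    simp only [Category.assoc, kernel.lift_ι]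
    have h5 := hk =≫ (biprod.inl : S.C m ⟶ S.C m ⊞ C'')
    simp only [Category.assoc] at h5
    rw [← h5, hufst]
  · intro g
    have h1 : (g ≫ kernel.ι f'' ≫ t) ≫ p' = 0 := by
      simp only [Category.assoc, ht]
      rw [kernel.condition, comp_zero]
    obtain ⟨k, hk⟩ := ex'.lift' _ h1
    obtain ⟨c, hc⟩ := S.surj m k
    have hx : biprod.lift (-c) (g ≫ kernel.ι f'') ≫ f = 0 := by
      rw [hf, biprod.lift_desc, Preadditive.neg_comp, ← Category.assoc, hc, hk]
      simp
    refine ⟨kernel.lift f _ hx, ?_⟩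
    rw [← cancel_mono (kernel.ι f'')]
    simp [kernel.lift_ι_assoc]

/-- The two-sided state in the inductive construction. -/
structure St (S : SyzChain T E) where
  X' : A
  X'' : A
  C' : A
  C'' : A
  f' : C' ⟶ X'
  f'' : C'' ⟶ X''
  m : ℕ
  add' : IsAddObj T C'
  add'' : IsAddObj T C''
  epi' : Epi f'
  epi'' : Epi f''
  surj' : ∀ g : T ⟶ X', ∃ h, h ≫ f' = g
  surj'' : ∀ g : T ⟶ X'', ∃ h, h ≫ f'' = g
  i' : S.K m ⟶ kernel f'
  p' : kernel f' ⟶ X''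
  zero' : i' ≫ p' = 0
  mono' : Mono i'
  ex' : (ShortComplex.mk i' p' zero').Exact
  psurj' : ∀ g : T ⟶ X'', ∃ h : T ⟶ kernel f', h ≫ p' = g
  i'' : S.K m ⟶ kernel f''
  p'' : kernel f'' ⟶ X'
  zero'' : i'' ≫ p'' = 0
  mono'' : Mono i''
  ex'' : (ShortComplex.mk i'' p'' zero'').Exact
  psurj'' : ∀ g : T ⟶ X', ∃ h : T ⟶ kernel f'', h ≫ p'' = g

variable {S : SyzChain T E}

noncomputable def nextSt (D : St S) : St S :=
  let s1 := step S D.m D.f' D.f'' D.add'' D.epi'' D.surj''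
    D.i' D.p' D.mono' D.zero' D.ex' D.psurj'
  let s2 := step S D.m D.f'' D.f' D.add' D.epi' D.surj'
    D.i'' D.p'' D.mono'' D.zero'' D.ex'' D.psurj''
  { X' := kernel D.f'
    X'' := kernel D.f''
    C' := S.C D.m ⊞ D.C''
    C'' := S.C D.m ⊞ D.C'
    f' := s1.f
    f'' := s2.f
    m := D.m + 1
    add' := isAddObj_biprod T (S.add D.m) D.add''
    add'' := isAddObj_biprod T (S.add D.m) D.add'
    epi' := s1.epi
    epi'' := s2.epi
    surj' := s1.surj
    surj'' := s2.surj
    i' := s1.i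
    p' := s1.p
    zero' := s1.zero
    mono' := s1.mono
    ex' := s1.ex
    psurj' := s1.psurj
    i'' := s2.i
    p'' := s2.p
    zero'' := s2.zero
    mono'' := s2.mono
    ex'' := s2.ex
    psurj'' := s2.psurj }

structure BaseSide (S : SyzChain T E) (U V : A) where
  f0 : S.C 0 ⟶ U
  epi0 : Epi f0
  surj0 : ∀ g : T ⟶ U, ∃ h, h ≫ f0 = g
  i0 : S.K 1 ⟶ kernel f0
  p0 : kernel f0 ⟶ V
  zero0 : i0 ≫ p0 = 0
  mono0 : Mono i0
  ex0 : (ShortComplex.mk i0 p0 zero0).Exact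
  psurj0 : ∀ g : T ⟶ V, ∃ h : T ⟶ kernel f0, h ≫ p0 = g

noncomputable def baseSide (S : SyzChain T E) (U V : A) (φ : S.K 0 ≅ U ⊞ V) :
    BaseSide S U V := by
  haveI := S.epif 0
  haveI := S.monoi 0
  haveI : Epi (biprod.fst : U ⊞ V ⟶ U) := epi_of_epi_fac biprod.inl_fst
  have hzero : S.i 0 ≫ (S.f 0 ≫ φ.hom ≫ biprod.fst) = 0 := by
    rw [← Category.assoc, S.wif 0, zero_comp]
  refine
  { f0 := S.f 0 ≫ φ.hom ≫ biprod.fst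
    epi0 := inferInstance
    surj0 := ?_
    i0 := kernel.lift _ (S.i 0) hzero
    p0 := kernel.ι (S.f 0 ≫ φ.hom ≫ biprod.fst) ≫ S.f 0 ≫ φ.hom ≫ biprod.snd
    zero0 := ?_
    mono0 := ?_
    ex0 := ?_
    psurj0 := ?_ }
  · intro g
    obtain ⟨h, hh⟩ := S.surj 0 (biprod.lift g 0 ≫ φ.inv)
    refine ⟨h, ?_⟩
    calc h ≫ S.f 0 ≫ φ.hom ≫ biprod.fst = (h ≫ S.f 0) ≫ φ.hom ≫ biprod.fst := by simp
      _ = (biprod.lift g 0 ≫ φ.inv) ≫ φ.hom ≫ biprod.fst := by rw [hh]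
      _ = g := by simp
  · simp [kernel.lift_ι_assoc, reassoc_of% (S.wif 0)]
  · exact mono_of_mono_fac (kernel.lift_ι _ _ _)
  · rw [ShortComplex.exact_iff_exact_up_to_refinements]
    intro B x₂ hx₂
    have hx : x₂ ≫ kernel.ι (S.f 0 ≫ φ.hom ≫ biprod.fst) ≫ S.f 0 ≫ φ.hom ≫ biprod.snd = 0 :=
      hx₂
    have hfst : x₂ ≫ kernel.ι (S.f 0 ≫ φ.hom ≫ biprod.fst) ≫ (S.f 0 ≫ φ.hom ≫ biprod.fst)
        = 0 := by
      rw [kernel.condition, comp_zero]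
    have h3 : (x₂ ≫ kernel.ι (S.f 0 ≫ φ.hom ≫ biprod.fst) ≫ S.f 0) ≫ φ.hom = 0 := by
      apply biprod.hom_ext
      · simpa using hfst
      · simpa using hx
    have hcomb : (x₂ ≫ kernel.ι (S.f 0 ≫ φ.hom ≫ biprod.fst)) ≫ S.f 0 = 0 := by
      rw [← cancel_mono φ.hom]
      simpa using h3
    obtain ⟨B', π, hπ, k, hk⟩ := (S.exacti 0).exact_up_to_refinements _ hcomb
    refine ⟨B', π, hπ, k, ?_⟩
    show π ≫ x₂ = k ≫ kernel.lift _ (S.i 0) hzero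
    rw [← cancel_mono (kernel.ι (S.f 0 ≫ φ.hom ≫ biprod.fst))]
    simp only [Category.assoc, kernel.lift_ι]
    simpa using hk
  · intro g
    obtain ⟨a, ha⟩ := S.surj 0 (biprod.lift 0 g ≫ φ.inv)
    have haf : a ≫ S.f 0 ≫ φ.hom ≫ biprod.fst = 0 := by
      rw [← Category.assoc, ha]
      simp
    refine ⟨kernel.lift _ a haf, ?_⟩
    simp [kernel.lift_ι_assoc, reassoc_of% ha]

noncomputable def baseSt {E' E'' : A} (S : SyzChain T (E' ⊞ E'')) : St S :=
  let b1 := baseSide S E' E'' S.iso0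
  let b2 := baseSide S E'' E' (S.iso0 ≪≫ biprod.braiding E' E'')
  { X' := E'
    X'' := E''
    C' := S.C 0
    C'' := S.C 0
    f' := b1.f0
    f'' := b2.f0
    m := 1
    add' := S.add 0
    add'' := S.add 0
    epi' := b1.epi0
    epi'' := b2.epi0
    surj' := b1.surj0
    surj'' := b2.surj0
    i' := b1.i0
    p' := b1.p0
    zero' := b1.zero0
    mono' := b1.mono0
    ex' := b1.ex0
    psurj' := b1.psurj0
    i'' := b2.i0
    p'' := b2.p0
    zero'' := b2.zero0
    mono'' := b2.mono0
    ex'' := b2.ex0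
    psurj'' := b2.psurj0 }

noncomputable def stSeq {E' E'' : A} (S : SyzChain T (E' ⊞ E'')) : ℕ → St S
  | 0 => baseSt S
  | (n + 1) => nextSt (stSeq S n)

/-- The key construction: a syzygy chain for a direct summand. -/
noncomputable def chainSummand {E' E'' : A} (S : SyzChain T (E' ⊞ E'')) : SyzChain T E' where
  K n := (stSeq S n).X'
  C n := (stSeq S n).C'
  iso0 := Iso.refl E'
  f n := (stSeq S n).f'
  i n := kernel.ι ((stSeq S n).f')
  add n := (stSeq S n).add'
  epif n := (stSeq S n).epi'
  monoi n := equalizer.ι_mono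
  wif n := kernel.condition _
  exacti n := ShortComplex.exact_kernel _
  surj n := (stSeq S n).surj'

end Stmt6Proof

namespace Stmt6Proof

variable {A : Type u} [Category.{v} A] [Abelian A] [HasCoproducts.{v} A] {T : A}

section Conversions

variable {E : A} (R : AddResolution T E)

/-- The augmented complex `⋯ ⟶ Tobj 0 ⟶ E ⟶ 0`, objects. -/
noncomputable def rY : ℕ → A
  | 0 => 0
  | 1 => E
  | (n + 2) => R.Tobj n

/-- The augmented complex, differentials. -/
noncomputable def rb : ∀ n, rY R (n + 1) ⟶ rY R n
  | 0 => 0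
  | 1 => R.ε
  | (n + 2) => R.d n

lemma rb_w : ∀ n, rb R (n + 1) ≫ rb R n = 0
  | 0 => comp_zero
  | 1 => R.w0
  | (n + 2) => R.w n

lemma rb_exact : ∀ n, (ShortComplex.mk (rb R (n + 1)) (rb R n) (rb_w R n)).Exact
  | 0 => (ShortComplex.exact_iff_epi _ rfl).2 R.epi
  | 1 => R.exact0
  | (n + 2) => R.exact n

lemma rb_surj : ∀ n (g : T ⟶ rY R (n + 1)), g ≫ rb R n = 0 →
    ∃ h : T ⟶ rY R (n + 2), h ≫ rb R (n + 1) = g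
  | 0 => fun g _ => R.homSurj g
  | 1 => fun g hg => R.homExact0 g hg
  | (n + 2) => fun g hg => R.homExact n g hg

/-- From a resolution to a syzygy chain. -/
noncomputable def resToChain : SyzChain T E where
  K n := kernel (rb R n)
  C n := R.Tobj n
  iso0 := kernelZeroIsoSource
  f n := kernel.lift (rb R n) (rb R (n + 1)) (rb_w R n)
  i n := kernel.ι (rb R (n + 1))
  add := R.add
  epif n := (ShortComplex.exact_iff_epi_kernel_lift _).1 (rb_exact R n)
  monoi n := equalizer.ι_mono
  wif n := by
    rw [← cancel_mono (kernel.ι (rb R n))]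
    refine (Category.assoc _ _ _).trans ?_
    erw [kernel.lift_ι, zero_comp]
    exact kernel.condition (rb R (n + 1))
  exacti n := by
    rw [ShortComplex.exact_iff_exact_up_to_refinements]
    intro B x₂ hx₂
    have hx : x₂ ≫ rb R (n + 1) = 0 := by
      have h0 := hx₂ =≫ kernel.ι (rb R n)
      simp only [Category.assoc, zero_comp] at h0
      erw [kernel.lift_ι] at h0
      exact h0
    exact ⟨B, 𝟙 B, inferInstance, kernel.lift _ x₂ hx,
      (Category.id_comp _).trans (kernel.lift_ι _ x₂ hx).symm⟩
  surj n g := by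
    obtain ⟨h, hh⟩ := rb_surj R n (g ≫ kernel.ι (rb R n)) (by simp)
    refine ⟨h, ?_⟩
    rw [← cancel_mono (kernel.ι (rb R n))]
    refine (Category.assoc _ _ _).trans ?_
    erw [kernel.lift_ι]
    exact hh

/-- From a syzygy chain to a resolution. -/
noncomputable def chainToRes (c : SyzChain T E) : AddResolution T E where
  Tobj := c.C
  d n := c.f (n + 1) ≫ c.i n
  ε := c.f 0 ≫ c.iso0.hom
  add := c.add
  epi := by
    haveI := c.epif 0
    infer_instance
  w0 := by simp [reassoc_of% (c.wif 0)]
  w n := by simp [reassoc_of% (c.wif (n + 1))]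
  exact0 := by
    rw [ShortComplex.exact_iff_exact_up_to_refinements]
    intro B x₂ hx₂
    have hx : x₂ ≫ c.f 0 = 0 := by
      rw [← cancel_mono c.iso0.hom]
      simpa using hx₂
    obtain ⟨B₁, π₁, hπ₁, x₁, hx₁⟩ := (c.exacti 0).exact_up_to_refinements x₂ hx
    haveI := c.epif 1
    obtain ⟨B₂, π₂, hπ₂, y, hy⟩ := surjective_up_to_refinements_of_epi (c.f 1) x₁
    haveI := hπ₁; haveI := hπ₂
    refine ⟨B₂, π₂ ≫ π₁, inferInstance, y, ?_⟩
    calc (π₂ ≫ π₁) ≫ x₂ = π₂ ≫ (π₁ ≫ x₂) := by simp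
      _ = π₂ ≫ (x₁ ≫ c.i 0) := by rw [hx₁]
      _ = (π₂ ≫ x₁) ≫ c.i 0 := by simp
      _ = (y ≫ c.f 1) ≫ c.i 0 := by rw [hy]
      _ = y ≫ c.f 1 ≫ c.i 0 := by simp
  exact n := by
    rw [ShortComplex.exact_iff_exact_up_to_refinements]
    intro B x₂ hx₂
    haveI := c.monoi n
    have hx : x₂ ≫ c.f (n + 1) = 0 := by
      rw [← cancel_mono (c.i n)]
      simpa using hx₂
    obtain ⟨B₁, π₁, hπ₁, x₁, hx₁⟩ := (c.exacti (n + 1)).exact_up_to_refinements x₂ hx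
    haveI := c.epif (n + 2)
    obtain ⟨B₂, π₂, hπ₂, y, hy⟩ := surjective_up_to_refinements_of_epi (c.f (n + 2)) x₁
    haveI := hπ₁; haveI := hπ₂
    refine ⟨B₂, π₂ ≫ π₁, inferInstance, y, ?_⟩
    calc (π₂ ≫ π₁) ≫ x₂ = π₂ ≫ (π₁ ≫ x₂) := by simp
      _ = π₂ ≫ (x₁ ≫ c.i (n + 1)) := by rw [hx₁]
      _ = (π₂ ≫ x₁) ≫ c.i (n + 1) := by simp
      _ = (y ≫ c.f (n + 2)) ≫ c.i (n + 1) := by rw [hy]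
      _ = y ≫ c.f (n + 2) ≫ c.i (n + 1) := by simp
  homSurj g := by
    obtain ⟨h, hh⟩ := c.surj 0 (g ≫ c.iso0.inv)
    exact ⟨h, by rw [← Category.assoc, hh]; simp⟩
  homExact0 g hg := by
    have hx : g ≫ c.f 0 = 0 := by
      rw [← cancel_mono c.iso0.hom]
      simpa using hg
    haveI : Mono (ShortComplex.mk (c.i 0) (c.f 0) (c.wif 0)).f := c.monoi 0
    obtain ⟨k, hk⟩ := (c.exacti 0).lift' g hx
    obtain ⟨h, hh⟩ := c.surj 1 k
    exact ⟨h, by rw [← Category.assoc, hh, hk]⟩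
  homExact n g hg := by
    haveI := c.monoi n
    have hx : g ≫ c.f (n + 1) = 0 := by
      rw [← cancel_mono (c.i n)]
      simpa using hg
    haveI : Mono (ShortComplex.mk (c.i (n + 1)) (c.f (n + 1)) (c.wif (n + 1))).f :=
      c.monoi (n + 1)
    obtain ⟨k, hk⟩ := (c.exacti (n + 1)).lift' g hx
    obtain ⟨h, hh⟩ := c.surj (n + 2) k
    exact ⟨h, by rw [← Category.assoc, hh, hk]⟩

end Conversions

lemma ext_subsingleton_of_retract [HasExt.{w} A] (T : A) {X Z : A} (i : ℕ)
    (s : X ⟶ Z) (r : Z ⟶ X) (hsr : s ≫ r = 𝟙 X)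
    (h : Subsingleton (Ext.{w} T Z i)) : Subsingleton (Ext.{w} T X i) := by
  constructor
  intro a b
  have key : ∀ x : Ext.{w} T X i,
      (x.comp (Ext.mk₀ s) (add_zero i)).comp (Ext.mk₀ r) (add_zero i) = x := by
    intro x
    rw [Ext.comp_assoc_of_third_deg_zero, Ext.mk₀_comp_mk₀, hsr, Ext.comp_mk₀_id]
  calc a = (a.comp (Ext.mk₀ s) (add_zero i)).comp (Ext.mk₀ r) (add_zero i) := (key a).symm
    _ = (b.comp (Ext.mk₀ s) (add_zero i)).comp (Ext.mk₀ r) (add_zero i) := by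
        rw [Subsingleton.elim (a.comp (Ext.mk₀ s) (add_zero i))
          (b.comp (Ext.mk₀ s) (add_zero i))]
    _ = b := key b

end Stmt6Proof

end Stmt6Proof

/-- For a weakly tilting object `T`, the class `E_max(T)` is closed under
direct summands: if `E' ⊕ E'' ∈ E_max(T)` then `E' ∈ E_max(T)` and `E'' ∈ E_max(T)`. -/
theorem stmt6 (A : Type u) [Category.{v} A] [Abelian A] [HasCoproducts.{v} A]
    [HasExt.{w} A] (T : A) (hT : IsWeaklyTilting T)
    (E' E'' : A) (h : InEMax T (E' ⊞ E'')) :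
    InEMax T E' ∧ InEMax T E'' := by
  obtain ⟨hext, ⟨R⟩⟩ := h
  let S : Stmt6Proof.SyzChain T (E' ⊞ E'') := Stmt6Proof.resToChain R
  refine ⟨⟨?_, ?_⟩, ⟨?_, ?_⟩⟩
  · intro i hi
    exact Stmt6Proof.ext_subsingleton_of_retract T i biprod.inl biprod.fst biprod.inl_fst
      (hext i hi)
  · exact ⟨Stmt6Proof.chainToRes (Stmt6Proof.chainSummand S)⟩
  · intro i hi
    exact Stmt6Proof.ext_subsingleton_of_retract T i biprod.inr biprod.snd biprod.inr_snd
      (hext i hi)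
  · exact ⟨Stmt6Proof.chainToRes (Stmt6Proof.chainSummand
      (Stmt6Proof.chainIso S (biprod.braiding E' E'')))⟩
end

section
/- Let A be an abelian category with set-indexed products and an injective cogenerator. If (T, E) is an ∞-tilting pair in A and E' is the closure of E under direct summands in A, then (T, E') is also an ∞-tilting pair, and E' is a coresolving subcategory of A. -/
open CategoryTheory Limits Abelian

universe w v u

set_option linter.unusedSectionVars false

section Aux
namespace Stmt12Aux

variable {A : Type u} [Category.{v} A] [Abelian A]


variable {A : Type u} [Category.{v} A] [Abelian A]

def SumCl (E : Set A) : Set A :=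
  {X : A | ∃ Y ∈ E, ∃ (s : X ⟶ Y) (r : Y ⟶ X), s ≫ r = 𝟙 X}

lemma mem_sumCl_of_mem {E : Set A} {X : A} (h : X ∈ E) : X ∈ SumCl E :=
  ⟨X, h, 𝟙 X, 𝟙 X, by simp⟩

lemma sumCl_retract {E : Set A} {X Y : A} (h : Y ∈ SumCl E)
    (s : X ⟶ Y) (r : Y ⟶ X) (hsr : s ≫ r = 𝟙 X) : X ∈ SumCl E := by
  obtain ⟨Z, hZ, s', r', h'⟩ := h
  exact ⟨Z, hZ, s ≫ s', r' ≫ r, by rw [Category.assoc, reassoc_of% h', hsr]⟩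

lemma biprod_shortExact (X Y : A) :
    (ShortComplex.mk (biprod.inl : X ⟶ X ⊞ Y) (biprod.snd : X ⊞ Y ⟶ Y)
      biprod.inl_snd).ShortExact where
  exact := (ShortComplex.Splitting.ofHasBinaryBiproduct X Y).exact
  mono_f := by dsimp; infer_instance
  epi_g := by dsimp; infer_instance

lemma kernel_retract {X Y : A} (s : X ⟶ Y) (r : Y ⟶ X) (hsr : s ≫ r = 𝟙 X) :
    ∃ (a : (kernel r : A) ⟶ Y) (b : Y ⟶ kernel r), a ≫ b = 𝟙 (kernel r) := by
  refine ⟨kernel.ι r, kernel.lift r (𝟙 Y - r ≫ s)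
    (by simp [Preadditive.sub_comp, Category.assoc, hsr]), ?_⟩
  rw [← cancel_mono (kernel.ι r)]
  simp [Preadditive.comp_sub]


set_option maxHeartbeats 1000000

lemma sumCl_ext {E : Set A}
    (hE5 : ∀ S : ShortComplex A, S.ShortExact → S.X₁ ∈ E → S.X₃ ∈ E → S.X₂ ∈ E)
    (S : ShortComplex A) (hS : S.ShortExact)
    (h1 : S.X₁ ∈ SumCl E) (h3 : S.X₃ ∈ SumCl E) : S.X₂ ∈ SumCl E := by
  obtain ⟨Y₁, hY₁, s₁, r₁, hsr₁⟩ := h1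
  obtain ⟨Y₃, hY₃, s₃, r₃, hsr₃⟩ := h3
  haveI := hS.mono_f
  haveI := hS.epi_g
  have hfg : S.f ≫ S.g = 0 ≫ r₃ := by rw [S.zero, zero_comp]
  set ι : S.X₁ ⟶ pullback S.g r₃ := pullback.lift S.f 0 hfg with hι
  have hι_fst : ι ≫ pullback.fst S.g r₃ = S.f := pullback.lift_fst _ _ _
  have hι_snd : ι ≫ pullback.snd S.g r₃ = 0 := pullback.lift_snd _ _ _
  haveI hmonoι : Mono ι := mono_of_mono_fac hι_fst
  have hSPexact : (ShortComplex.mk ι (pullback.snd S.g r₃) hι_snd).Exact := by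
    rw [ShortComplex.exact_iff_exact_up_to_refinements]
    intro B x₂ hx₂
    dsimp at x₂ hx₂ ⊢
    obtain ⟨B', π, hπ, x₁, fac⟩ := hS.exact.exact_up_to_refinements
      (x₂ ≫ pullback.fst S.g r₃)
      (by rw [Category.assoc, pullback.condition, ← Category.assoc, hx₂, zero_comp])
    refine ⟨B', π, hπ, x₁, pullback.hom_ext ?_ ?_⟩
    · simpa [hι_fst] using fac
    · simp only [Category.assoc, hι_snd, comp_zero, hx₂, reassoc_of% hx₂]
  haveI : Epi (ShortComplex.mk ι (pullback.snd S.g r₃) hι_snd).g := by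
    dsimp; infer_instance
  -- pushout
  have hqcond : ι ≫ pullback.snd S.g r₃ = s₁ ≫ 0 := by rw [hι_snd, comp_zero]
  set q : pushout ι s₁ ⟶ Y₃ := pushout.desc (pullback.snd S.g r₃) 0 hqcond with hq
  have hinlq : pushout.inl ι s₁ ≫ q = pullback.snd S.g r₃ := pushout.inl_desc _ _ _
  have hinrq : pushout.inr ι s₁ ≫ q = 0 := pushout.inr_desc _ _ _
  haveI hepiq : Epi q := by
    haveI : Epi (pullback.snd S.g r₃) := inferInstance
    exact epi_of_epi_fac hinlq
  haveI hmonoinr : Mono (pushout.inr ι s₁) := inferInstance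
  have hSQexact : (ShortComplex.mk (pushout.inr ι s₁) q hinrq).Exact := by
    apply ShortComplex.exact_of_g_is_cokernel
    refine CokernelCofork.IsColimit.ofπ _ _
      (fun {Z'} w hw => hSPexact.desc (pushout.inl ι s₁ ≫ w)
        (by rw [← Category.assoc]
            change (ι ≫ pushout.inl ι s₁) ≫ w = 0
            rw [pushout.condition, Category.assoc, hw, comp_zero]))
      ?_ ?_
    · intro Z' w hw
      apply pushout.hom_ext
      · rw [← Category.assoc, hinlq]
        exact hSPexact.g_desc _ _
      · rw [← Category.assoc, hinrq, zero_comp, hw]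
    · intro Z' w hw m hm
      rw [← cancel_epi q, hm]
      symm
      apply pushout.hom_ext
      · rw [← Category.assoc, hinlq]
        exact hSPexact.g_desc _ _
      · rw [← Category.assoc, hinrq, zero_comp, hw]
  have hQE : (pushout ι s₁ : A) ∈ E :=
    hE5 _ ⟨hSQexact⟩ hY₁ hY₃
  -- retract
  have hσcond : 𝟙 S.X₂ ≫ S.g = (S.g ≫ s₃) ≫ r₃ := by
    rw [Category.id_comp, Category.assoc, hsr₃, Category.comp_id]
  set σ : S.X₂ ⟶ pushout ι s₁ :=
    pullback.lift (𝟙 S.X₂) (S.g ≫ s₃) hσcond ≫ pushout.inl ι s₁ with hσ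
  have hρcond : ι ≫ 𝟙 (pullback S.g r₃) = s₁ ≫ (r₁ ≫ ι) := by
    rw [Category.comp_id, ← Category.assoc, hsr₁, Category.id_comp]
  set ρ : pushout ι s₁ ⟶ pullback S.g r₃ :=
    pushout.desc (𝟙 _) (r₁ ≫ ι) hρcond with hρ
  have hret : σ ≫ (ρ ≫ pullback.fst S.g r₃) = 𝟙 S.X₂ := by
    rw [hσ, hρ, Category.assoc, pushout.inl_desc_assoc, Category.id_comp,
      pullback.lift_fst]
  exact sumCl_retract (mem_sumCl_of_mem hQE) σ (ρ ≫ pullback.fst S.g r₃) hret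


lemma sumCl_coker {E : Set A}
    (hE4 : ∀ S : ShortComplex A, S.ShortExact → S.X₁ ∈ E → S.X₂ ∈ E → S.X₃ ∈ E)
    (hE5 : ∀ S : ShortComplex A, S.ShortExact → S.X₁ ∈ E → S.X₃ ∈ E → S.X₂ ∈ E)
    (S : ShortComplex A) (hS : S.ShortExact)
    (h1 : S.X₁ ∈ SumCl E) (h2 : S.X₂ ∈ SumCl E) : S.X₃ ∈ SumCl E := by
  obtain ⟨Y₁, hY₁, s₁, r₁, hsr₁⟩ := h1
  obtain ⟨Y₂, hY₂, s₂, r₂, hsr₂⟩ := h2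
  haveI := hS.mono_f
  haveI := hS.epi_g
  haveI hms₂ : Mono s₂ := mono_of_mono_fac hsr₂
  set m : Y₁ ⟶ Y₁ ⊞ Y₂ := biprod.lift (𝟙 Y₁ - r₁ ≫ s₁) (r₁ ≫ S.f ≫ s₂) with hm
  haveI hmono : Mono m := by
    rw [Preadditive.mono_iff_cancel_zero]
    intro Z g hg
    have h2' : g ≫ (r₁ ≫ S.f ≫ s₂) = 0 := by
      have := hg =≫ biprod.snd
      simpa [hm] using this
    have hr : g ≫ r₁ = 0 := by
      haveI : Mono (S.f ≫ s₂) := mono_comp _ _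
      have : (g ≫ r₁) ≫ (S.f ≫ s₂) = 0 := by
        simpa [Category.assoc] using h2'
      exact zero_of_comp_mono _ this
    have h1' : g ≫ (𝟙 Y₁ - r₁ ≫ s₁) = 0 := by
      have := hg =≫ biprod.fst
      simpa [hm] using this
    have : g = g ≫ (𝟙 Y₁ - r₁ ≫ s₁) + (g ≫ r₁) ≫ s₁ := by
      simp [Preadditive.comp_sub]
    rw [this, h1', hr, zero_comp, add_zero]
  have hCexact : (ShortComplex.mk m (cokernel.π m) (cokernel.condition m)).Exact :=
    ShortComplex.exact_of_g_is_cokernel _ (cokernelIsCokernel m)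
  have hbi : (Y₁ ⊞ Y₂ : A) ∈ E := hE5 _ (biprod_shortExact Y₁ Y₂) hY₁ hY₂
  have hCE : (cokernel m : A) ∈ E := hE4 _ ⟨hCexact⟩ hY₁ hbi
  have hmdesc : m ≫ biprod.desc 0 (r₂ ≫ S.g) = 0 := by
    rw [hm, biprod.lift_desc, comp_zero, zero_add, Category.assoc]
    slice_lhs 3 4 => rw [hsr₂]
    rw [Category.id_comp]
    slice_lhs 2 3 => rw [S.zero]
    simp
  set pbar : (cokernel m : A) ⟶ S.X₃ := cokernel.desc m (biprod.desc 0 (r₂ ≫ S.g)) hmdesc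
    with hpbar
  have hfσ : S.f ≫ (s₂ ≫ biprod.inr) = s₁ ≫ m := by
    apply biprod.hom_ext
    · simp [hm, Preadditive.comp_sub, reassoc_of% hsr₁]
    · simp [hm, reassoc_of% hsr₁]
  have hσ0 : S.f ≫ (s₂ ≫ biprod.inr ≫ cokernel.π m) = 0 := by
    rw [← Category.assoc, ← Category.assoc, Category.assoc S.f s₂ biprod.inr, hfσ,
      Category.assoc, cokernel.condition, comp_zero]
  set σbar : S.X₃ ⟶ (cokernel m : A) :=
    hS.exact.desc (s₂ ≫ biprod.inr ≫ cokernel.π m) hσ0 with hσbar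
  have hret : σbar ≫ pbar = 𝟙 S.X₃ := by
    rw [← cancel_epi S.g, ← Category.assoc, hσbar, hS.exact.g_desc, Category.comp_id]
    rw [hpbar]
    simp [reassoc_of% hsr₂]
  exact sumCl_retract (mem_sumCl_of_mem hCE) σbar pbar hret

lemma sumCl_ext1 [HasExt.{w} A] {E : Set A} {T : A}
    (hE3 : ∀ X ∈ E, Subsingleton (Ext.{w} T X 1))
    {X : A} (hX : X ∈ SumCl E) : Subsingleton (Ext.{w} T X 1) := by
  obtain ⟨Y, hY, s, r, hsr⟩ := hX
  have hsub := hE3 Y hY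
  constructor
  intro a b
  have key : ∀ e : Ext.{w} T X 1,
      e = (e.comp (Ext.mk₀ s) (add_zero 1)).comp (Ext.mk₀ r) (add_zero 1) := by
    intro e
    rw [Ext.comp_assoc_of_third_deg_zero, Ext.mk₀_comp_mk₀, hsr, Ext.comp_mk₀_id]
  rw [key a, key b,
    Subsingleton.elim (a.comp (Ext.mk₀ s) (add_zero 1)) (b.comp (Ext.mk₀ s) (add_zero 1))]


lemma sumCl_precover [HasCoproducts.{v} A] {E : Set A} {T : A}
    (hE5 : ∀ S : ShortComplex A, S.ShortExact → S.X₁ ∈ E → S.X₃ ∈ E → S.X₂ ∈ E)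
    (hE6 : ∀ X ∈ E, ∀ (T' : A), IsAddObj T T' → ∀ t : T' ⟶ X,
      (∀ (T'' : A), IsAddObj T T'' → ∀ h : T'' ⟶ X, ∃ g : T'' ⟶ T', g ≫ t = h) →
      Epi t ∧ (kernel t : A) ∈ E)
    (hAddE : ∀ X : A, IsAddObj T X → X ∈ E)
    {X : A} (hX : X ∈ SumCl E)
    (T' : A) (hT' : IsAddObj T T') (t : T' ⟶ X)
    (ht : ∀ (T'' : A), IsAddObj T T'' → ∀ h : T'' ⟶ X, ∃ g : T'' ⟶ T', g ≫ t = h) :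
    Epi t ∧ (kernel t : A) ∈ SumCl E := by
  obtain ⟨Y, hY, s, r, hsr⟩ := hX
  set T'' : A := ∐ (fun _ : (T ⟶ Y) => T) with hT''
  set v : T'' ⟶ Y := Sigma.desc (fun h => h) with hv
  have hT''add : IsAddObj T T'' := ⟨(T ⟶ Y), 𝟙 _, 𝟙 _, by simp⟩
  have hvpre : ∀ (T₀ : A), IsAddObj T T₀ → ∀ h : T₀ ⟶ Y, ∃ g : T₀ ⟶ T'', g ≫ v = h := by
    intro T₀ hT₀ h
    obtain ⟨I₀, s₀, r₀, hsr₀⟩ := hT₀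
    refine ⟨s₀ ≫ Sigma.desc (fun i => Sigma.ι (fun _ : (T ⟶ Y) => T)
      (Sigma.ι (fun _ : I₀ => T) i ≫ r₀ ≫ h)), ?_⟩
    rw [Category.assoc]
    have hdv : (Sigma.desc (fun i => Sigma.ι (fun _ : (T ⟶ Y) => T)
        (Sigma.ι (fun _ : I₀ => T) i ≫ r₀ ≫ h))) ≫ v = r₀ ≫ h := by
      ext i
      simp [hv]
    rw [hdv, ← Category.assoc, hsr₀, Category.id_comp]
  obtain ⟨hepiv, hkerv⟩ := hE6 Y hY T'' hT''add v hvpre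
  haveI := hepiv
  haveI hepir : Epi r := epi_of_epi_fac hsr
  set p : T'' ⟶ X := v ≫ r with hp
  haveI hepip : Epi p := by rw [hp]; exact epi_comp v r
  obtain ⟨a, ha⟩ := ht T'' hT''add p
  have hepit : Epi t := epi_of_epi_fac ha
  obtain ⟨b, hbv⟩ := hvpre T' hT' (t ≫ s)
  have hb : b ≫ p = t := by
    rw [hp, ← Category.assoc, hbv, Category.assoc, hsr, Category.comp_id]
  -- the short exact sequence kernel v → kernel p → kernel r
  have hαw : kernel.ι v ≫ p = 0 := by rw [hp, ← Category.assoc, kernel.condition, zero_comp]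
  set α : (kernel v : A) ⟶ kernel p := kernel.lift p (kernel.ι v) hαw with hα
  have hβw : (kernel.ι p ≫ v) ≫ r = 0 := by rw [Category.assoc]; exact kernel.condition p
  set β : (kernel p : A) ⟶ kernel r := kernel.lift r (kernel.ι p ≫ v) hβw with hβ
  have hw0 : α ≫ β = 0 := by
    rw [← cancel_mono (kernel.ι r)]
    simp [hα, hβ]
  haveI hmonoα : Mono α := mono_of_mono_fac (kernel.lift_ι p (kernel.ι v) hαw)
  haveI hepiβ : Epi β := by
    have hPB : pullback.fst v (kernel.ι r) ≫ p = 0 := by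
      rw [hp, ← Category.assoc, pullback.condition, Category.assoc, kernel.condition,
        comp_zero]
    have hθβ : kernel.lift p _ hPB ≫ β = pullback.snd v (kernel.ι r) := by
      rw [← cancel_mono (kernel.ι r), hβ, Category.assoc, kernel.lift_ι,
        ← Category.assoc, kernel.lift_ι]
      exact pullback.condition
    haveI : Epi (pullback.snd v (kernel.ι r)) := inferInstance
    exact epi_of_epi_fac hθβ
  have hexactK : (ShortComplex.mk α β hw0).Exact := by
    rw [ShortComplex.exact_iff_exact_up_to_refinements]
    intro B x₂ hx₂
    dsimp at x₂ hx₂ ⊢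
    have hlift : (x₂ ≫ kernel.ι p) ≫ v = 0 := by
      have h' := hx₂ =≫ kernel.ι r
      simp only [Category.assoc, hβ, kernel.lift_ι, zero_comp] at h'
      rw [Category.assoc]
      exact h' 
    refine ⟨B, 𝟙 B, inferInstance, kernel.lift v (x₂ ≫ kernel.ι p) hlift, ?_⟩
    rw [Category.id_comp, ← cancel_mono (kernel.ι p), Category.assoc, hα, kernel.lift_ι,
      kernel.lift_ι]
  have hK : (kernel p : A) ∈ SumCl E := by
    refine sumCl_ext hE5 (ShortComplex.mk α β hw0) ⟨hexactK⟩ (mem_sumCl_of_mem hkerv) ?_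
    obtain ⟨a', b', hab⟩ := kernel_retract s r hsr
    exact sumCl_retract (mem_sumCl_of_mem hY) a' b' hab
  have hT'E : T' ∈ E := hAddE T' hT'
  have hbip : (T' ⊞ kernel p : A) ∈ SumCl E :=
    sumCl_ext hE5 _ (biprod_shortExact T' (kernel p)) (mem_sumCl_of_mem hT'E) hK
  -- retract chain
  set u : T' ⊞ T'' ⟶ X := biprod.desc t p with hu
  have hinlu : (biprod.inl : T' ⟶ T' ⊞ T'') ≫ u = t := by rw [hu, biprod.inl_desc]
  have hinru : (biprod.inr : T'' ⟶ T' ⊞ T'') ≫ u = p := by rw [hu, biprod.inr_desc]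
  set j : (kernel t : A) ⟶ kernel u :=
    kernel.lift u (kernel.ι t ≫ biprod.inl)
      (by rw [Category.assoc, hinlu, kernel.condition]) with hj
  have hq2w : (kernel.ι u ≫ (biprod.fst + biprod.snd ≫ a)) ≫ t = 0 := by
    have : (biprod.fst + biprod.snd ≫ a) ≫ t = u := by
      rw [Preadditive.add_comp, Category.assoc, ha, hu, biprod.desc_eq]
    rw [Category.assoc, this, kernel.condition]
  set q2 : (kernel u : A) ⟶ kernel t :=
    kernel.lift t (kernel.ι u ≫ (biprod.fst + biprod.snd ≫ a)) hq2w with hq2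
  have hjq : j ≫ q2 = 𝟙 (kernel t) := by
    rw [← cancel_mono (kernel.ι t), Category.assoc, hq2, kernel.lift_ι, hj,
      ← Category.assoc, kernel.lift_ι, Category.id_comp, Category.assoc,
      Preadditive.comp_add]
    simp
  have hq'w : (kernel.ι u ≫ (biprod.snd + biprod.fst ≫ b)) ≫ p = 0 := by
    have : (biprod.snd + biprod.fst ≫ b) ≫ p = u := by
      rw [Preadditive.add_comp, Category.assoc, hb, hu, biprod.desc_eq, add_comm]
    rw [Category.assoc, this, kernel.condition]
  set q' : (kernel u : A) ⟶ kernel p :=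
    kernel.lift p (kernel.ι u ≫ (biprod.snd + biprod.fst ≫ b)) hq'w with hq'
  have hj'w : biprod.lift (𝟙 T') (-b) ≫ u = 0 := by
    rw [hu, biprod.lift_desc, Category.id_comp, Preadditive.neg_comp, hb, add_neg_cancel]
  set j' : T' ⟶ (kernel u : A) := kernel.lift u (biprod.lift (𝟙 T') (-b)) hj'w with hj'
  have hk'w : (kernel.ι p ≫ biprod.inr) ≫ u = 0 := by
    rw [Category.assoc, hinru, kernel.condition]
  set k' : (kernel p : A) ⟶ kernel u := kernel.lift u (kernel.ι p ≫ biprod.inr) hk'w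
    with hk'
  set αm : (kernel u : A) ⟶ T' ⊞ kernel p := biprod.lift (kernel.ι u ≫ biprod.fst) q'
    with hαm
  set βm : T' ⊞ (kernel p : A) ⟶ kernel u := biprod.desc j' k' with hβm
  have hβι : βm ≫ kernel.ι u
      = biprod.desc (biprod.lift (𝟙 T') (-b)) (kernel.ι p ≫ biprod.inr) := by
    rw [hβm]
    apply biprod.hom_ext' <;> simp [hj', hk']
  have hq'ι : q' ≫ kernel.ι p = kernel.ι u ≫ (biprod.snd + biprod.fst ≫ b) := by
    rw [hq', kernel.lift_ι]
  have hαβ : αm ≫ βm = 𝟙 (kernel u) := by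
    rw [← cancel_mono (kernel.ι u), Category.assoc, hβι, hαm, biprod.lift_desc,
      Category.id_comp, ← Category.assoc q', hq'ι, biprod.lift_eq]
    simp only [Preadditive.comp_add, Preadditive.add_comp, Category.assoc,
      Preadditive.comp_neg, Preadditive.neg_comp, Category.comp_id, Category.id_comp]
    conv_rhs => rw [← Category.comp_id (kernel.ι u), ← biprod.total,
      Preadditive.comp_add]
    abel
  refine ⟨hepit, sumCl_retract hbip (j ≫ αm) (βm ≫ q2) ?_⟩
  rw [Category.assoc, ← Category.assoc αm, hαβ, Category.id_comp, hjq]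

end Stmt12Aux
end Aux

/-- If `(T, E)` is an `∞`-tilting pair and `E'` is the closure of `E` under
direct summands, then `(T, E')` is also an `∞`-tilting pair and `E'` is a coresolving
subcategory of `A`. -/
theorem stmt12 (A : Type u) [Category.{v} A] [Abelian A]
    [HasProducts.{v} A] [HasCoproducts.{v} A] [HasExt.{w} A]
    (J : A) (hJ : IsInjectiveCogenerator J)
    (T : A) (E : Set A) (hTE : IsTiltingPair T E) :
    ∀ E' : Set A,
      E' = {X : A | ∃ Y ∈ E, ∃ (s : X ⟶ Y) (r : Y ⟶ X), s ≫ r = 𝟙 X} →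
      IsTiltingPair T E' ∧
      -- `E'` is coresolving:
      -- closed under extensions
      ((∀ S : ShortComplex A, S.ShortExact → S.X₁ ∈ E' → S.X₃ ∈ E' → S.X₂ ∈ E') ∧
      -- closed under cokernels of monomorphisms
      (∀ S : ShortComplex A, S.ShortExact → S.X₁ ∈ E' → S.X₂ ∈ E' → S.X₃ ∈ E') ∧
      -- closed under direct summands
      (∀ X Y : A, X ∈ E' → (∃ (s : Y ⟶ X) (r : X ⟶ Y), s ≫ r = 𝟙 Y) → Y ∈ E') ∧
      -- cogenerating
      (∀ X : A, ∃ Y ∈ E', ∃ f : X ⟶ Y, Mono f)) := by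
  
  intro E' hE'
  have hEq : E' = Stmt12Aux.SumCl E := hE'
  subst hEq
  obtain ⟨hT1, hT2, hT3, hT4, hT5, hT6⟩ := hTE
  refine ⟨⟨fun J' hJ' => Stmt12Aux.mem_sumCl_of_mem (hT1 J' hJ'),
    fun X hX => Stmt12Aux.mem_sumCl_of_mem (hT2 X hX),
    fun X hX => Stmt12Aux.sumCl_ext1 hT3 hX,
    fun S hS h1 h2 => Stmt12Aux.sumCl_coker hT4 hT5 S hS h1 h2,
    fun S hS h1 h3 => Stmt12Aux.sumCl_ext hT5 S hS h1 h3,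
    fun X hX T' hT' t ht => Stmt12Aux.sumCl_precover hT5 hT6 hT2 hX T' hT' t ht⟩,
    fun S hS h1 h3 => Stmt12Aux.sumCl_ext hT5 S hS h1 h3,
    fun S hS h1 h2 => Stmt12Aux.sumCl_coker hT4 hT5 S hS h1 h2,
    ?_, ?_⟩
  · rintro X Y hX ⟨s, r, hsr⟩
    exact Stmt12Aux.sumCl_retract hX s r hsr
  · intro X
    obtain ⟨I, f, hf⟩ := hJ.2 X
    haveI : ∀ _i : I, Injective J := fun _ => hJ.1
    exact ⟨∏ᶜ (fun _ : I => J), Stmt12Aux.mem_sumCl_of_mem (hT1 _ inferInstance), f, hf⟩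
end

section
/- Let A be a complete, cocomplete abelian category with an injective cogenerator and let T ∈ A be an ∞-tilting object. If E_i ⊆ A, for i ranging over a nonempty index set I, is a collection of full subcategories such that (T, E_i) is an ∞-tilting pair for each i ∈ I, then (T, E) is an ∞-tilting pair, where E = ⋂_{i∈I} E_i. Dually, if B is a complete, cocomplete abelian category with a projective generator, W ∈ B is an ∞-cotilting object, and (W, F_j) are ∞-cotilting pairs for j in a nonempty index set, then (W, F) is an ∞-cotilting pair, where F = ⋂_j F_j. -/
open CategoryTheory Limits Abelian

universe w v u

/-- Nonempty intersections of `∞`-tilting classes for a fixed `∞`-tilting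
object `T` are again `∞`-tilting classes; dually for `∞`-cotilting classes. -/
theorem stmt15 (A : Type u) [Category.{v} A] [Abelian A] [HasLimits A] [HasColimits A]
    [HasExt.{w} A] (J : A) (hJ : IsInjectiveCogenerator J)
    (B : Type u') [Category.{v'} B] [Abelian B] [HasLimits B] [HasColimits B]
    [HasExt.{w'} B] (P : B) (hP : IsProjectiveGenerator P) :
    (∀ (T : A), IsInfTilting T → ∀ (I : Type t) (Ei : I → Set A), Nonempty I →
      (∀ i : I, IsTiltingPair T (Ei i)) → IsTiltingPair T (⋂ i : I, Ei i)) ∧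
    (∀ (W : B), IsInfCotilting W → ∀ (I' : Type t') (Fj : I' → Set B), Nonempty I' →
      (∀ j : I', IsCotiltingPair W (Fj j)) → IsCotiltingPair W (⋂ j : I', Fj j)) := by
  
  constructor
  · intro T _ I Ei ⟨i0⟩ h
    refine ⟨fun X hX => Set.mem_iInter.2 fun i => (h i).1 X hX,
      fun X hX => Set.mem_iInter.2 fun i => (h i).2.1 X hX,
      fun X hX => (h i0).2.2.1 X (Set.mem_iInter.1 hX i0),
      fun S hS h1 h2 => Set.mem_iInter.2 fun i =>
        (h i).2.2.2.1 S hS (Set.mem_iInter.1 h1 i) (Set.mem_iInter.1 h2 i),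
      fun S hS h1 h2 => Set.mem_iInter.2 fun i =>
        (h i).2.2.2.2.1 S hS (Set.mem_iInter.1 h1 i) (Set.mem_iInter.1 h2 i),
      fun X hX T' hT' t ht => ?_⟩
    refine ⟨((h i0).2.2.2.2.2 X (Set.mem_iInter.1 hX i0) T' hT' t ht).1,
      Set.mem_iInter.2 fun i =>
        ((h i).2.2.2.2.2 X (Set.mem_iInter.1 hX i) T' hT' t ht).2⟩
  · intro W _ I' Fj ⟨j0⟩ h
    refine ⟨fun X hX => Set.mem_iInter.2 fun j => (h j).1 X hX,
      fun X hX => Set.mem_iInter.2 fun j => (h j).2.1 X hX,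
      fun X hX => (h j0).2.2.1 X (Set.mem_iInter.1 hX j0),
      fun S hS h1 h2 => Set.mem_iInter.2 fun j =>
        (h j).2.2.2.1 S hS (Set.mem_iInter.1 h1 j) (Set.mem_iInter.1 h2 j),
      fun S hS h1 h2 => Set.mem_iInter.2 fun j =>
        (h j).2.2.2.2.1 S hS (Set.mem_iInter.1 h1 j) (Set.mem_iInter.1 h2 j),
      fun X hX W' hW' t ht => ?_⟩
    refine ⟨((h j0).2.2.2.2.2 X (Set.mem_iInter.1 hX j0) W' hW' t ht).1,
      Set.mem_iInter.2 fun j =>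
        ((h j).2.2.2.2.2 X (Set.mem_iInter.1 hX j) W' hW' t ht).2⟩
end

section
/- In the setting of the ∞-tilting-cotilting correspondence, let (T, E) be an ∞-tilting pair in A and let (W, F) with F = Ψ(E) be the corresponding ∞-cotilting pair in B. If the full subcategory E ⊆ A is closed under set-indexed products in A, then the full subcategory F ⊆ B is closed under set-indexed products in B. If the full subcategory F ⊆ B is closed under set-indexed coproducts in B, then the full subcategory E ⊆ A is closed under set-indexed coproducts in A. -/
open CategoryTheory Limits Abelian

universe w v u

/-- Lemma 4.1.  In the setting of the `∞`-tilting-cotilting correspondence,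
let `(T, E)` be an `∞`-tilting pair and `(W, F)`, `F = Ψ(E)`, the corresponding `∞`-cotilting
pair.  If `E` is closed under set-indexed products in `A`, then `F` is closed under
set-indexed products in `B`; if `F` is closed under set-indexed coproducts in `B`, then `E`
is closed under set-indexed coproducts in `A`. -/
theorem stmt16
    -- `A` is a complete, cocomplete abelian category with an injective cogenerator `J`
    (A : Type u) [Category.{v} A] [Abelian A] [HasLimits A] [HasColimits A] [HasExt.{w} A]
    (J : A) (hJ : IsInjectiveCogenerator J)
    -- `T` is an `∞`-tilting object in `A`
    (T : A) (hT : IsInfTilting T)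
    -- `B` is a complete, cocomplete abelian category with enough projective objects
    (B : Type u') [Category.{v} B] [Abelian B] [HasLimits B] [HasColimits B]
    [EnoughProjectives B] [HasExt.{w'} B]
    -- `Φ : B → A` is right exact and restricts to an equivalence `B_proj ≃ Add(T)`
    (Φ : B ⥤ A) [Φ.Additive] [PreservesFiniteColimits Φ]
    (hmap : ∀ Q : B, Projective Q → IsAddObj T (Φ.obj Q))
    (hsurj : ∀ X : A, IsAddObj T X → ∃ Q : B, Projective Q ∧ Nonempty (Φ.obj Q ≅ X))
    (hff : ∀ Q Q' : B, Projective Q → Projective Q' →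
      Function.Bijective (fun f : Q ⟶ Q' => Φ.map f))
    -- `Ψ : A → B` is a right adjoint of `Φ`
    (Ψ : A ⥤ B) [Ψ.Additive] (adj : Φ ⊣ Ψ)
    -- `P = Ψ(T)` is a projective generator of `B`
    (hP : IsProjectiveGenerator (Ψ.obj T))
    -- in this setting `Ψ`, `Φ` restrict to mutually inverse equivalences
    -- `E_max(T) ≃ F_max(W)`:
    (himg₁ : ∀ E : A, InEMax T E → InFMax (Ψ.obj J) (Ψ.obj E))
    (himg₂ : ∀ F : B, InFMax (Ψ.obj J) F → InEMax T (Φ.obj F))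
    (hcounit : ∀ E : A, InEMax T E → IsIso (adj.counit.app E))
    (hunit : ∀ F : B, InFMax (Ψ.obj J) F → IsIso (adj.unit.app F))
    -- `(T, E)` is an `∞`-tilting pair, `E ⊆ E_max(T)` is closed under isomorphisms, and
    -- `F = Ψ(E)` is the corresponding `∞`-cotilting class
    (E : Set A) (hTE : IsTiltingPair T E) (hEmax : E ⊆ {X : A | InEMax T X})
    (hEiso : ∀ X Y : A, X ∈ E → Nonempty (X ≅ Y) → Y ∈ E)
    (F : Set B) (hF : F = {Y : B | ∃ X ∈ E, Nonempty (Ψ.obj X ≅ Y)}) :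
    -- if `E` is closed under products then so is `F`
    ((∀ (I : Type v) (f : I → A), (∀ i, f i ∈ E) → (∏ᶜ f) ∈ E) →
      (∀ (I : Type v) (g : I → B), (∀ i, g i ∈ F) → (∏ᶜ g) ∈ F)) ∧
    -- if `F` is closed under coproducts then so is `E`
    ((∀ (I : Type v) (g : I → B), (∀ i, g i ∈ F) → (∐ g) ∈ F) →
      (∀ (I : Type v) (f : I → A), (∀ i, f i ∈ E) → (∐ f) ∈ E)) := by
  subst hF
  constructor
  · intro hE I g hg
    choose X hXE hiso using hg
    have hisos : ∀ i, Ψ.obj (X i) ≅ g i := fun i => (hiso i).some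
    refine ⟨∏ᶜ X, hE I X hXE, ⟨?_⟩⟩
    haveI := adj.rightAdjoint_preservesLimits
    exact PreservesProduct.iso Ψ X ≪≫ Pi.mapIso hisos
  · intro hFc I f hf
    have hh : ∀ i, Ψ.obj (f i) ∈ {Y : B | ∃ X ∈ E, Nonempty (Ψ.obj X ≅ Y)} :=
      fun i => ⟨f i, hf i, ⟨Iso.refl _⟩⟩
    obtain ⟨X, hXE, ⟨e⟩⟩ := hFc I (fun i => Ψ.obj (f i)) hh
    haveI := adj.leftAdjoint_preservesColimits
    haveI : ∀ i, IsIso (adj.counit.app (f i)) := fun i => hcounit (f i) (hEmax (hf i))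
    haveI : IsIso (adj.counit.app X) := hcounit X (hEmax hXE)
    refine hEiso X (∐ f) hXE ⟨?_⟩
    exact (asIso (adj.counit.app X)).symm ≪≫ Φ.mapIso e ≪≫
      PreservesCoproduct.iso Φ (fun i => Ψ.obj (f i)) ≪≫
      Sigma.mapIso (fun i => asIso (adj.counit.app (f i)))
end

section
/- Let D and 'D be triangulated categories, let (D^{≤0}, D^{≥0}) be a t-structure on D, and let F: 'D → D be a triangulated functor. Suppose that for every object X ∈ D^{≥0} there exists an object G(X) ∈ 'D together with an isomorphism of functors Hom_D(F(−), X) ≅ Hom_{'D}(−, G(X)) on 'D, and suppose that the induced adjunction morphism ε_X: F(G(X)) → X is an isomorphism in D for all X ∈ D^{≥0}. Set 'D^{≤0} := F^{-1}(D^{≤0}), the full preimage of D^{≤0} under F, and 'D^{≥0} := the essential image of D^{≥0} under G. Then the pair ('D^{≤0}, 'D^{≥0}) is a t-structure on 'D, and the functors F and G restrict to mutually inverse equivalences between the abelian hearts 'A = 'D^{≤0} ∩ 'D^{≥0} and A = D^{≤0} ∩ D^{≥0} of the two t-structures. -/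
open CategoryTheory Limits Pretriangulated

universe v u v' u'

/-- A t-structure on a (pre)triangulated category `D`, given by a pair of strictly full
subcategories `(D^{≤0}, D^{≥0})`:  `D^{≤0} ⊆ D^{≤1}`, `D^{≥1} ⊆ D^{≥0}`, morphisms from
`D^{≤0}` to `D^{≥1}` vanish, and every object fits in a distinguished triangle
`τ_{≤0}X → X → τ_{≥1}X → (τ_{≤0}X)[1]`.  Here `X ∈ D^{≤1} ↔ X⟦1⟧ ∈ D^{≤0}` and
`X ∈ D^{≥1} ↔ X⟦1⟧ ∈ D^{≥0}`. -/
def IsTStructure (D : Type u) [Category.{v} D] [HasZeroObject D] [HasShift D ℤ]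
    [Preadditive D] [∀ n : ℤ, (shiftFunctor D n).Additive] [Pretriangulated D]
    (Dle Dge : Set D) : Prop :=
  -- both subcategories are strictly full (closed under isomorphisms)
  (∀ X Y : D, X ∈ Dle → Nonempty (X ≅ Y) → Y ∈ Dle) ∧
  (∀ X Y : D, X ∈ Dge → Nonempty (X ≅ Y) → Y ∈ Dge) ∧
  -- `D^{≤0} ⊆ D^{≤1}`
  (∀ X : D, X ∈ Dle → X⟦(1 : ℤ)⟧ ∈ Dle) ∧
  -- `D^{≥1} ⊆ D^{≥0}`
  (∀ X : D, X⟦(1 : ℤ)⟧ ∈ Dge → X ∈ Dge) ∧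
  -- `Hom(D^{≤0}, D^{≥1}) = 0`
  (∀ X Y : D, X ∈ Dle → Y⟦(1 : ℤ)⟧ ∈ Dge → ∀ f : X ⟶ Y, f = 0) ∧
  -- truncation triangles
  (∀ X : D, ∃ (A B : D) (f : A ⟶ X) (g : X ⟶ B) (h : B ⟶ A⟦(1 : ℤ)⟧),
    Triangle.mk f g h ∈ (distTriang D) ∧ A ∈ Dle ∧ B⟦(1 : ℤ)⟧ ∈ Dge)

section Aux

variable {D : Type u} [Category.{v} D] {D' : Type u'} [Category.{v'} D']

lemma aux_esymm (F : D' ⥤ D) (X : D) (GX : D')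
    (e : ∀ Y : D', (F.obj Y ⟶ X) ≃ (Y ⟶ GX))
    (enat : ∀ (Y Y' : D') (u : Y' ⟶ Y) (φ : F.obj Y ⟶ X),
      e Y' (F.map u ≫ φ) = u ≫ e Y φ)
    (Y : D') (u : Y ⟶ GX) :
    (e Y).symm u = F.map u ≫ (e GX).symm (𝟙 GX) := by
  apply (e Y).injective
  rw [Equiv.apply_symm_apply, enat, Equiv.apply_symm_apply, Category.comp_id]

lemma aux_repr (F : D' ⥤ D) (X : D) (GX Z : D')
    (e : ∀ Y : D', (F.obj Y ⟶ X) ≃ (Y ⟶ GX))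
    (enat : ∀ (Y Y' : D') (u : Y' ⟶ Y) (φ : F.obj Y ⟶ X),
      e Y' (F.map u ≫ φ) = u ≫ e Y φ)
    (e' : ∀ Y : D', (F.obj Y ⟶ X) ≃ (Y ⟶ Z))
    (enat' : ∀ (Y Y' : D') (u : Y' ⟶ Y) (φ : F.obj Y ⟶ X),
      e' Y' (F.map u ≫ φ) = u ≫ e' Y φ) :
    Nonempty (Z ≅ GX) := by
  refine ⟨⟨e Z ((e' Z).symm (𝟙 Z)), e' GX ((e GX).symm (𝟙 GX)), ?_, ?_⟩⟩
  · have h1 : ((e' Z).symm (𝟙 Z) : F.obj Z ⟶ X)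
        = F.map (e Z ((e' Z).symm (𝟙 Z))) ≫ (e GX).symm (𝟙 GX) := by
      rw [← aux_esymm F X GX e enat, Equiv.symm_apply_apply]
    rw [← enat' GX Z (e Z ((e' Z).symm (𝟙 Z))) ((e GX).symm (𝟙 GX)), ← h1,
      Equiv.apply_symm_apply]
  · have h2 : ((e GX).symm (𝟙 GX) : F.obj GX ⟶ X)
        = F.map (e' GX ((e GX).symm (𝟙 GX))) ≫ (e' Z).symm (𝟙 Z) := by
      rw [← aux_esymm F X Z e' enat', Equiv.symm_apply_apply]
    rw [← enat Z GX (e' GX ((e GX).symm (𝟙 GX))) ((e' Z).symm (𝟙 Z)), ← h2,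
      Equiv.apply_symm_apply]

end Aux

section Aux2

variable {D : Type u} [Category.{v} D] [HasShift D ℤ]
  {D' : Type u'} [Category.{v'} D'] [HasShift D' ℤ]

noncomputable def auxShiftEquiv (F : D' ⥤ D) [F.CommShift ℤ] (n : ℤ) (X : D) (GX : D')
    (eX : ∀ Y : D', (F.obj Y ⟶ X) ≃ (Y ⟶ GX)) (Y : D') :
    (F.obj Y ⟶ X⟦n⟧) ≃ (Y ⟶ GX⟦n⟧) :=
  (((shiftEquiv D n).symm.toAdjunction.homEquiv (F.obj Y) X).symm.trans
    ((((F.commShiftIso (-n)).app Y).symm.homCongr (Iso.refl X)).trans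
      ((eX (Y⟦(-n : ℤ)⟧)).trans
        ((shiftEquiv D' n).symm.toAdjunction.homEquiv Y GX))))

lemma auxShiftEquiv_natural (F : D' ⥤ D) [F.CommShift ℤ] (n : ℤ) (X : D) (GX : D')
    (eX : ∀ Y : D', (F.obj Y ⟶ X) ≃ (Y ⟶ GX))
    (enatX : ∀ (Y Y' : D') (u : Y' ⟶ Y) (φ : F.obj Y ⟶ X),
      eX Y' (F.map u ≫ φ) = u ≫ eX Y φ)
    (Y Y' : D') (u : Y' ⟶ Y) (φ : F.obj Y ⟶ X⟦n⟧) :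
    auxShiftEquiv F n X GX eX Y' (F.map u ≫ φ) = u ≫ auxShiftEquiv F n X GX eX Y φ := by
  change (shiftEquiv D' n).symm.toAdjunction.homEquiv Y' GX (eX (Y'⟦(-n : ℤ)⟧)
      ((((F.commShiftIso (-n)).app Y').symm.homCongr (Iso.refl X))
        (((shiftEquiv D n).symm.toAdjunction.homEquiv (F.obj Y') X).symm (F.map u ≫ φ))))
    = u ≫ (shiftEquiv D' n).symm.toAdjunction.homEquiv Y GX (eX (Y⟦(-n : ℤ)⟧)
      ((((F.commShiftIso (-n)).app Y).symm.homCongr (Iso.refl X))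
        (((shiftEquiv D n).symm.toAdjunction.homEquiv (F.obj Y) X).symm φ)))
  erw [Adjunction.homEquiv_naturality_left_symm]
  have hnat : F.map ((shiftFunctor D' (-n)).map u) ≫ ((F.commShiftIso (-n)).app Y).hom
      = ((F.commShiftIso (-n)).app Y').hom ≫ (shiftEquiv D n).symm.functor.map (F.map u) :=
    (F.commShiftIso (-n)).hom.naturality u
  have hcomm : (((F.commShiftIso (-n)).app Y').symm.homCongr (Iso.refl X))
      ((shiftEquiv D n).symm.functor.map (F.map u) ≫
        ((shiftEquiv D n).symm.toAdjunction.homEquiv (F.obj Y) X).symm φ)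
      = F.map ((shiftFunctor D' (-n)).map u) ≫
        (((F.commShiftIso (-n)).app Y).symm.homCongr (Iso.refl X))
          (((shiftEquiv D n).symm.toAdjunction.homEquiv (F.obj Y) X).symm φ) := by
    simp only [Iso.homCongr_apply, Iso.refl_hom, Category.comp_id, Iso.symm_inv]
    erw [← Category.assoc, ← hnat, Category.assoc]
    erw [Iso.homCongr_apply, Iso.refl_hom, Category.comp_id, Iso.symm_inv]
    rfl
  erw [hcomm, enatX]
  erw [Adjunction.homEquiv_naturality_left]

end Aux2

/-- Lemma 5.1.  Lifting a t-structure along a triangulated functor `F`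
admitting a partial right adjoint `G` defined on the coaisle, with invertible counit:
`('D^{≤0}, 'D^{≥0}) := (F⁻¹(D^{≤0}), G(D^{≥0}))` is a t-structure on `'D`, and `F`, `G`
restrict to mutually inverse equivalences between the hearts. -/
theorem stmt17
    (D : Type u) [Category.{v} D] [HasZeroObject D] [HasShift D ℤ]
    [Preadditive D] [∀ n : ℤ, (shiftFunctor D n).Additive] [Pretriangulated D]
    (D' : Type u') [Category.{v'} D'] [HasZeroObject D'] [HasShift D' ℤ]
    [Preadditive D'] [∀ n : ℤ, (shiftFunctor D' n).Additive] [Pretriangulated D']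
    -- a t-structure `(D^{≤0}, D^{≥0})` on `D`
    (Dle Dge : Set D) (ht : IsTStructure D Dle Dge)
    -- a triangulated functor `F : 'D → D`
    (F : D' ⥤ D) [F.CommShift ℤ] [F.IsTriangulated]
    -- a partial right adjoint `G` of `F`, defined on `D^{≥0}`
    (G : D → D')
    (e : ∀ (X : D), X ∈ Dge → ∀ (Y : D'), (F.obj Y ⟶ X) ≃ (Y ⟶ G X))
    (enat : ∀ (X : D) (hX : X ∈ Dge) (Y Y' : D') (u : Y' ⟶ Y) (φ : F.obj Y ⟶ X),
      e X hX Y' (F.map u ≫ φ) = u ≫ e X hX Y φ)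
    -- whose adjunction counit `ε_X : F(G(X)) → X` is an isomorphism for all `X ∈ D^{≥0}`
    (hcounit : ∀ (X : D) (hX : X ∈ Dge), IsIso ((e X hX (G X)).symm (𝟙 (G X)))) :
    ∀ Dle' Dge' : Set D',
      Dle' = {Y : D' | F.obj Y ∈ Dle} →
      Dge' = {Y : D' | ∃ X ∈ Dge, Nonempty (Y ≅ G X)} →
      -- `('D^{≤0}, 'D^{≥0})` is a t-structure on `'D`
      IsTStructure D' Dle' Dge' ∧
      -- `F` and `G` restrict to mutually inverse equivalences between the hearts
      (∀ Y : D', Y ∈ Dle' → Y ∈ Dge' → F.obj Y ∈ Dle ∧ F.obj Y ∈ Dge) ∧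
      (∀ X : D, X ∈ Dle → X ∈ Dge → G X ∈ Dle' ∧ G X ∈ Dge') ∧
      (∀ X : D, X ∈ Dle → X ∈ Dge → Nonempty (F.obj (G X) ≅ X)) ∧
      (∀ Y : D', Y ∈ Dle' → Y ∈ Dge' → Nonempty (Y ≅ G (F.obj Y))) ∧
      (∀ Y Y' : D', Y ∈ Dle' → Y ∈ Dge' → Y' ∈ Dle' → Y' ∈ Dge' →
        Function.Bijective (fun u : Y ⟶ Y' => F.map u)) := by
  obtain ⟨hle_iso, hge_iso, hle_sh, hge_sh, hvan, htri⟩ := ht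
  intro Dle' Dge' hDle' hDge'
  subst hDle' hDge'
  -- the counit formula
  have hesymm : ∀ (X : D) (hX : X ∈ Dge) (Y : D') (u : Y ⟶ G X),
      (e X hX Y).symm u = F.map u ≫ (e X hX (G X)).symm (𝟙 (G X)) :=
    fun X hX Y u => aux_esymm F X (G X) (fun Y => e X hX Y) (enat X hX) Y u
  -- `F` is injective on morphisms into objects of the form `G X`
  have hFinj : ∀ (X : D) (hX : X ∈ Dge) (Y : D') (u v : Y ⟶ G X),
      F.map u = F.map v → u = v := by
    intro X hX Y u v huv
    apply (e X hX Y).symm.injective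
    rw [hesymm X hX Y u, hesymm X hX Y v, huv]
  -- `F` is surjective on morphisms into objects of the form `G X`
  have hFsurj : ∀ (X : D) (hX : X ∈ Dge) (Y : D') (w : F.obj Y ⟶ F.obj (G X)),
      ∃ u : Y ⟶ G X, F.map u = w := by
    intro X hX Y w
    haveI := hcounit X hX
    refine ⟨e X hX Y (w ≫ (e X hX (G X)).symm (𝟙 (G X))), ?_⟩
    have h3 : F.map (e X hX Y (w ≫ (e X hX (G X)).symm (𝟙 (G X)))) ≫
        (e X hX (G X)).symm (𝟙 (G X)) = w ≫ (e X hX (G X)).symm (𝟙 (G X)) := by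
      rw [← hesymm, Equiv.symm_apply_apply]
    exact (cancel_mono _).1 h3
  -- compatibility of `G` with shifts
  have hGshift : ∀ (n : ℤ) (X : D) (hX : X ∈ Dge) (hX' : X⟦n⟧ ∈ Dge),
      Nonempty ((G X)⟦n⟧ ≅ G (X⟦n⟧)) := by
    intro n X hX hX'
    exact aux_repr F (X⟦n⟧) (G (X⟦n⟧)) ((G X)⟦n⟧) (fun Y => e _ hX' Y) (enat _ hX')
      (auxShiftEquiv F n X (G X) (fun Y => e X hX Y))
      (auxShiftEquiv_natural F n X (G X) (fun Y => e X hX Y) (enat X hX))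
  -- `Dge` is closed under `⟦-1⟧`
  have hgeIso : ∀ {X X' : D}, X ∈ Dge → (X ≅ X') → X' ∈ Dge :=
    fun h i => hge_iso _ _ h ⟨i⟩
  have hsh1 : ∀ X : D, X ∈ Dge → (X⟦(-1 : ℤ)⟧)⟦(1 : ℤ)⟧ ∈ Dge := by
    intro X hX
    exact hgeIso hX ((shiftEquiv D (1 : ℤ)).counitIso.app X).symm
  have hshiftneg : ∀ X : D, X ∈ Dge → X⟦(-1 : ℤ)⟧ ∈ Dge :=
    fun X hX => hge_sh _ (hsh1 X hX)
  -- objects of the heart of `D'` are mapped into `Dge`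
  have hFheart : ∀ (Y : D'), (∃ X ∈ Dge, Nonempty (Y ≅ G X)) → F.obj Y ∈ Dge := by
    intro Y hY
    obtain ⟨X, hX, ⟨i⟩⟩ := hY
    haveI := hcounit X hX
    exact hge_iso X (F.obj Y) hX
      ⟨(F.mapIso i ≪≫ asIso ((e X hX (G X)).symm (𝟙 (G X)))).symm⟩
  refine ⟨⟨?_, ?_, ?_, ?_, ?_, ?_⟩, ?_, ?_, ?_, ?_, ?_⟩
  · -- Dle' closed under isos
    intro X Y hX ⟨i⟩
    exact hle_iso _ _ hX ⟨F.mapIso i⟩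
  · -- Dge' closed under isos
    intro X Y hX ⟨i⟩
    obtain ⟨Z, hZ, ⟨j⟩⟩ := hX
    exact ⟨Z, hZ, ⟨i.symm ≪≫ j⟩⟩
  · -- Dle' closed under ⟦1⟧
    intro Y hY
    show F.obj (Y⟦(1 : ℤ)⟧) ∈ Dle
    exact hle_iso _ _ (hle_sh _ hY) ⟨((F.commShiftIso (1 : ℤ)).app Y).symm⟩
  · -- Dge' closed under ⟦-1⟧
    intro Y hY
    obtain ⟨X, hX, ⟨i⟩⟩ := hY
    obtain ⟨j⟩ := hGshift (-1) X hX (hshiftneg X hX)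
    exact ⟨X⟦(-1 : ℤ)⟧, hshiftneg X hX,
      ⟨(shiftEquiv D' (1 : ℤ)).unitIso.app Y ≪≫ (shiftFunctor D' (-1 : ℤ)).mapIso i ≪≫ j⟩⟩
  · -- vanishing
    intro Y Z hY hZ f
    obtain ⟨X, hX, ⟨i⟩⟩ := hZ
    have hXm := hshiftneg X hX
    obtain ⟨j⟩ := hGshift (-1) X hX hXm
    let k : Z ≅ G (X⟦(-1 : ℤ)⟧) :=
      (shiftEquiv D' (1 : ℤ)).unitIso.app Z ≪≫ (shiftFunctor D' (-1 : ℤ)).mapIso i ≪≫ j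
    have hzero : (e (X⟦(-1 : ℤ)⟧) hXm Y).symm (f ≫ k.hom) = 0 :=
      hvan (F.obj Y) (X⟦(-1 : ℤ)⟧) hY (hsh1 X hX) _
    rw [hesymm] at hzero
    haveI := hcounit (X⟦(-1 : ℤ)⟧) hXm
    have hF0 : F.map (f ≫ k.hom) = 0 := by
      apply (cancel_mono ((e (X⟦(-1 : ℤ)⟧) hXm (G (X⟦(-1 : ℤ)⟧))).symm (𝟙 _))).1
      rw [hzero, zero_comp]
    have hf : f ≫ k.hom = 0 := by
      apply hFinj _ hXm Y
      rw [hF0, F.map_zero]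
    have := congrArg (fun t => t ≫ k.inv) hf
    simpa using this
  · -- truncation triangles
    intro Y
    obtain ⟨A, B, f, g, h, hdist, hA, hB⟩ := htri (F.obj Y)
    have hBge : B ∈ Dge := hge_sh _ hB
    obtain ⟨A', f', h', hdist'⟩ := distinguished_cocone_triangle₁ (e B hBge Y g)
    haveI := hcounit B hBge
    have hmap := F.map_distinguished _ hdist'
    have hcomm : (F.mapTriangle.obj (Triangle.mk f' (e B hBge Y g) h')).mor₂ ≫
        (e B hBge (G B)).symm (𝟙 (G B)) = 𝟙 (F.obj Y) ≫ g := by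
      change F.map (e B hBge Y g) ≫ (e B hBge (G B)).symm (𝟙 (G B)) = 𝟙 (F.obj Y) ≫ g
      rw [Category.id_comp, ← hesymm B hBge Y, Equiv.symm_apply_apply]
    obtain ⟨a, ha1, ha2⟩ := complete_distinguished_triangle_morphism₁
      (F.mapTriangle.obj (Triangle.mk f' (e B hBge Y g) h')) (Triangle.mk f g h)
      hmap hdist (𝟙 (F.obj Y)) ((e B hBge (G B)).symm (𝟙 (G B))) hcomm
    have hiso : IsIso a := by
      have := isIso₁_of_isIso₂₃
        (Triangle.homMk (F.mapTriangle.obj (Triangle.mk f' (e B hBge Y g) h'))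
          (Triangle.mk f g h) a (𝟙 (F.obj Y)) ((e B hBge (G B)).symm (𝟙 (G B))) ha1 hcomm ha2)
        hmap hdist (by exact (inferInstance : IsIso (𝟙 (F.obj Y)))) (by exact (inferInstance : IsIso ((e B hBge (G B)).symm (𝟙 (G B)))))
      exact this
    refine ⟨A', G B, f', e B hBge Y g, h', hdist', ?_, ?_⟩
    · show F.obj A' ∈ Dle
      exact hle_iso A (F.obj A') hA ⟨(asIso a).symm⟩
    · obtain ⟨j⟩ := hGshift 1 B hBge hB
      exact ⟨B⟦(1 : ℤ)⟧, hB, ⟨j⟩⟩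
  · -- F maps heart to heart
    intro Y hY1 hY2
    exact ⟨hY1, hFheart Y hY2⟩
  · -- G maps heart to heart
    intro X hX1 hX2
    haveI := hcounit X hX2
    refine ⟨?_, ⟨X, hX2, ⟨Iso.refl _⟩⟩⟩
    show F.obj (G X) ∈ Dle
    exact hle_iso X _ hX1 ⟨(asIso ((e X hX2 (G X)).symm (𝟙 (G X)))).symm⟩
  · -- F(G X) ≅ X
    intro X hX1 hX2
    haveI := hcounit X hX2
    exact ⟨asIso ((e X hX2 (G X)).symm (𝟙 (G X)))⟩
  · -- Y ≅ G (F Y)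
    intro Y hY1 hY2
    obtain ⟨X, hX, ⟨i⟩⟩ := hY2
    haveI := hcounit X hX
    have hFY : F.obj Y ∈ Dge := hFheart Y ⟨X, hX, ⟨i⟩⟩
    let χ : F.obj Y ≅ X := F.mapIso i ≪≫ asIso ((e X hX (G X)).symm (𝟙 (G X)))
    let e'' : ∀ W : D', (F.obj W ⟶ F.obj Y) ≃ (W ⟶ Y) := fun W =>
      ((Iso.refl (F.obj W)).homCongr χ).trans
        ((e X hX W).trans ((Iso.refl W).homCongr i.symm))
    have enat'' : ∀ (W W' : D') (u : W' ⟶ W) (φ : F.obj W ⟶ F.obj Y),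
        e'' W' (F.map u ≫ φ) = u ≫ e'' W φ := by
      intro W W' u φ
      dsimp only [e'', Equiv.trans_apply]
      simp only [Iso.homCongr_apply, Iso.refl_inv, Iso.symm_hom, Category.id_comp,
        Category.assoc]
      rw [enat X hX W W' u (φ ≫ χ.hom)]
      simp only [Category.assoc]
    exact aux_repr F (F.obj Y) (G (F.obj Y)) Y (fun W => e _ hFY W) (enat _ hFY) e'' enat''
  · -- F is bijective on heart morphisms
    intro Y Y' hY1 hY2 hY'1 hY'2
    obtain ⟨X', hX', ⟨i⟩⟩ := hY'2
    constructor
    · intro u v huv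
      dsimp at huv
      have h1 : F.map (u ≫ i.hom) = F.map (v ≫ i.hom) := by
        rw [F.map_comp, F.map_comp, huv]
      have h2 := hFinj X' hX' Y _ _ h1
      exact (cancel_mono i.hom).1 h2
    · intro w
      obtain ⟨u₀, hu₀⟩ := hFsurj X' hX' Y (w ≫ F.map i.hom)
      refine ⟨u₀ ≫ i.inv, ?_⟩
      dsimp
      rw [F.map_comp, hu₀, Category.assoc, ← F.map_comp, Iso.hom_inv_id, F.map_id,
        Category.comp_id]
end

section
/- Let A be a complete, cocomplete abelian category with an injective cogenerator, and let (T, E) be an ∞-tilting pair in A. Suppose there exists an integer n ≥ 0 such that every object E ∈ E admits an exact sequence 0 → E → J^0 → J^1 → ⋯ → J^n → 0 in A with all J^i injective objects of A, which remains exact after applying the functor Hom_A(T,−). Then E is contained in every full subcategory E' ⊆ A such that (T, E') is an ∞-tilting pair; that is, E is the unique minimal full subcategory forming an ∞-tilting pair with T. -/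
open CategoryTheory Limits Abelian

universe w v u

section Aux

variable {A : Type u} [Category.{v} A] [Abelian A] [HasLimits A] [HasColimits A] [HasExt.{w} A]

/-- Zero objects are injective. -/
lemma isZero_injective {X : A} (h : IsZero X) : Injective X :=
  ⟨fun _ f _ => ⟨0, h.eq_of_tgt _ _⟩⟩

/-- Key lemma: if `0 → X → J → Z → 0` is a `Hom(T,−)`-exact short exact sequence with
`J, Z ∈ E'`, then `X ∈ E'` for any tilting class `E'`. -/
lemma mem_of_shortExact (T : A) (E' : Set A) (hT : IsTiltingPair.{w} T E')
    {X J Z : A} (ι : X ⟶ J) (π : J ⟶ Z) (w : ι ≫ π = 0)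
    (hse : (ShortComplex.mk ι π w).ShortExact)
    (hJ : J ∈ E') (hZ : Z ∈ E')
    (hlift : ∀ g : T ⟶ Z, ∃ h : T ⟶ J, h ≫ π = g) : X ∈ E' := by
  obtain ⟨hinj, hadd, -, hcoker, hext, hprec⟩ := hT
  haveI : Mono ι := hse.mono_f
  haveI : Epi π := hse.epi_g
  -- the `Add T`-precover of `Z`
  set T' : A := ∐ (fun _ : (T ⟶ Z) => T) with hT'def
  set t : T' ⟶ Z := Sigma.desc (fun g => g) with htdef
  have hT'add : IsAddObj T T' := ⟨(T ⟶ Z), 𝟙 _, 𝟙 _, Category.id_comp _⟩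
  have hprecover : ∀ (T'' : A), IsAddObj T T'' → ∀ h : T'' ⟶ Z,
      ∃ g : T'' ⟶ T', g ≫ t = h := by
    rintro T'' ⟨I, s, r, hsr⟩ h
    refine ⟨s ≫ Sigma.desc (fun i => Sigma.ι (fun _ : (T ⟶ Z) => T)
      (Sigma.ι (fun _ : I => T) i ≫ r ≫ h)), ?_⟩
    have h1 : Sigma.desc (fun i => Sigma.ι (fun _ : (T ⟶ Z) => T)
        (Sigma.ι (fun _ : I => T) i ≫ r ≫ h)) ≫ t = r ≫ h := by
      ext i
      simp [htdef]
    rw [Category.assoc, h1, ← Category.assoc, hsr, Category.id_comp]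
  obtain ⟨ht_epi, hK⟩ := hprec Z hZ T' hT'add t hprecover
  haveI : Epi t := ht_epi
  -- the pullback
  set P : A := pullback π t with hPdef
  set fst : P ⟶ J := pullback.fst π t with hfstdef
  set snd : P ⟶ T' := pullback.snd π t with hsnddef
  haveI : Epi snd := Abelian.epi_pullback_of_epi_f π t
  haveI : Epi fst := Abelian.epi_pullback_of_epi_g π t
  have hμw : ι ≫ π = (0 : X ⟶ T') ≫ t := by rw [w, zero_comp]
  set μ : X ⟶ P := pullback.lift ι 0 hμw with hμdef
  have hμfst : μ ≫ fst = ι := pullback.lift_fst _ _ _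
  have hμsnd : μ ≫ snd = 0 := pullback.lift_snd _ _ _
  haveI : Mono μ := mono_of_mono_fac hμfst
  have hμ'w : (0 : kernel t ⟶ J) ≫ π = kernel.ι t ≫ t := by
    rw [zero_comp, kernel.condition]
  set μ' : kernel t ⟶ P := pullback.lift 0 (kernel.ι t) hμ'w with hμ'def
  have hμ'fst : μ' ≫ fst = 0 := pullback.lift_fst _ _ _
  have hμ'snd : μ' ≫ snd = kernel.ι t := pullback.lift_snd _ _ _
  haveI : Mono μ' := mono_of_mono_fac hμ'snd
  -- `P ∈ E'` via the short exact sequence `0 → kernel t → P → J → 0`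
  have hS1 : (ShortComplex.mk μ' fst hμ'fst).ShortExact := by
    refine ⟨(ShortComplex.mk μ' fst hμ'fst).exact_of_f_is_kernel ?_⟩
    refine KernelFork.IsLimit.ofι' _ _ (fun {W} k hk => ?_)
    have hk' : (k ≫ snd) ≫ t = 0 := by
      rw [Category.assoc, ← pullback.condition, ← Category.assoc, hk, zero_comp]
    refine ⟨kernel.lift t (k ≫ snd) hk', ?_⟩
    apply pullback.hom_ext
    · rw [Category.assoc, hμ'fst, comp_zero, hk]
    · rw [Category.assoc, hμ'snd, kernel.lift_ι]
  have hP : P ∈ E' := hext _ hS1 hK hJ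
  -- the section of `snd`
  choose lifts hlifts using hlift
  have hσw : ∀ g : T ⟶ Z, lifts g ≫ π = Sigma.ι (fun _ : (T ⟶ Z) => T) g ≫ t := by
    intro g
    rw [hlifts g, htdef]
    simp
  set σ : T' ⟶ P := Sigma.desc (fun g => pullback.lift (lifts g)
    (Sigma.ι (fun _ : (T ⟶ Z) => T) g) (hσw g)) with hσdef
  have hσsnd : σ ≫ snd = 𝟙 T' := by
    ext g
    simp [hσdef, hsnddef]
    exact (pullback.lift_snd _ _ _).trans (Category.comp_id _).symm
  -- `μ` is a kernel of `snd`
  have hμlim : IsLimit (KernelFork.ofι μ hμsnd) := by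
    refine KernelFork.IsLimit.ofι' _ _ (fun {W} k hk => ?_)
    have hk' : (k ≫ fst) ≫ π = 0 := by
      rw [Category.assoc, pullback.condition, ← Category.assoc, hk, zero_comp]
    obtain ⟨l, hl⟩ := KernelFork.IsLimit.lift' hse.exact.fIsKernel (k ≫ fst) hk'
    refine ⟨l, ?_⟩
    apply pullback.hom_ext
    · rw [Category.assoc, hμfst]; exact hl
    · rw [Category.assoc, hμsnd, comp_zero, hk]
  -- the retraction `ρ`
  have hfac : (𝟙 P - snd ≫ σ) ≫ snd = 0 := by
    rw [Preadditive.sub_comp, Category.id_comp, Category.assoc, hσsnd, Category.comp_id,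
      sub_self]
  obtain ⟨ρ, hρ⟩ := KernelFork.IsLimit.lift' hμlim _ hfac
  rw [Fork.ι_ofι] at hρ
  have hμρ : μ ≫ ρ = 𝟙 X := by
    rw [← cancel_mono μ, Category.assoc, hρ, Preadditive.comp_sub, Category.comp_id,
      ← Category.assoc, hμsnd, zero_comp, sub_zero, Category.id_comp]
  have hσρ : σ ≫ ρ = 0 := by
    rw [← cancel_mono μ, Category.assoc, hρ, Preadditive.comp_sub, Category.comp_id,
      ← Category.assoc, hσsnd, Category.id_comp, sub_self, zero_comp]
  -- the split short exact sequence `0 → T' → P → X → 0`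
  have hsplit : (ShortComplex.mk σ ρ hσρ).Splitting :=
    { r := snd
      s := μ
      f_r := hσsnd
      s_g := hμρ
      id := by
        change snd ≫ σ + ρ ≫ μ = 𝟙 P
        rw [hρ]
        abel }
  exact hcoker _ hsplit.shortExact (hadd T' hT'add) hP

end Aux


/-- If `(T, E)` is an `∞`-tilting pair such that every object of `E` admits
a finite `Hom(T,−)`-exact injective coresolution of length `n`, then `E` is contained in every
`∞`-tilting class for `T`, i.e. `E` is the unique minimal such class. -/
theorem stmt19 (A : Type u) [Category.{v} A] [Abelian A] [HasLimits A] [HasColimits A]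
    [HasExt.{w} A] (J : A) (hJ : IsInjectiveCogenerator J)
    (T : A) (E : Set A) (hTE : IsTiltingPair T E) (n : ℕ)
    (hfin : ∀ X ∈ E, ∃ (Jo : ℕ → A) (d : ∀ i : ℕ, Jo i ⟶ Jo (i + 1)) (ι : X ⟶ Jo 0),
      Mono ι ∧
      (∀ i, Injective (Jo i)) ∧
      (∀ i, n < i → IsZero (Jo i)) ∧
      (∃ w0 : ι ≫ d 0 = 0, (ShortComplex.mk ι (d 0) w0).Exact) ∧
      (∀ i, ∃ w : d i ≫ d (i + 1) = 0, (ShortComplex.mk (d i) (d (i + 1)) w).Exact) ∧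
      -- the coresolution remains exact after applying `Hom_A(T, −)`
      (∀ g : T ⟶ Jo 0, g ≫ d 0 = 0 → ∃ h : T ⟶ X, h ≫ ι = g) ∧
      (∀ (i : ℕ) (g : T ⟶ Jo (i + 1)), g ≫ d (i + 1) = 0 → ∃ h : T ⟶ Jo i, h ≫ d i = g)) :
    ∀ E' : Set A, IsTiltingPair T E' → E ⊆ E' := by
  intro E' hE' X hX
  obtain ⟨Jo, d, ι, hmono, hinjJ, hzeroJ, ⟨w0, hex0⟩, hexact, hhom0, hhom⟩ := hfin X hX
  haveI : Mono ι := hmono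
  choose wd hexd using hexact
  -- the induced maps onto cosyzygies
  set p : ∀ i, Jo i ⟶ kernel (d (i + 1)) :=
    fun i => kernel.lift (d (i + 1)) (d i) (wd i) with hpdef
  have hpι : ∀ i, p i ≫ kernel.ι (d (i + 1)) = d i := fun i => kernel.lift_ι _ _ _
  have hpepi : ∀ i, Epi (p i) := fun i =>
    ((ShortComplex.mk (d i) (d (i + 1)) (wd i)).exact_iff_epi_kernel_lift).mp (hexd i)
  -- the lifting property against `T` for the cosyzygy sequences
  have hliftp : ∀ i, ∀ g : T ⟶ kernel (d (i + 1)), ∃ h : T ⟶ Jo i, h ≫ p i = g := by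
    intro i g
    have hg : (g ≫ kernel.ι (d (i + 1))) ≫ d (i + 1) = 0 := by
      rw [Category.assoc, kernel.condition, comp_zero]
    obtain ⟨h, hh⟩ := hhom i (g ≫ kernel.ι (d (i + 1))) hg
    refine ⟨h, ?_⟩
    rw [← cancel_mono (kernel.ι (d (i + 1))), Category.assoc, hpι, hh]
  -- downward induction on the cosyzygies
  have aux : ∀ m i, n + 1 ≤ i + m → kernel (d i) ∈ E' := by
    intro m
    induction m with
    | zero =>
      intro i hi
      have hz : IsZero (Jo i) := hzeroJ i (by omega)
      have hk : IsZero (kernel (d i)) :=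
        IsZero.of_mono_eq_zero (kernel.ι (d i)) (hz.eq_of_tgt _ _)
      exact hE'.1 _ (isZero_injective hk)
    | succ m ih =>
      intro i hi
      have hZ : kernel (d (i + 1)) ∈ E' := ih (i + 1) (by omega)
      have hw : kernel.ι (d i) ≫ p i = 0 := by
        rw [← cancel_mono (kernel.ι (d (i + 1))), Category.assoc, hpι,
          kernel.condition, zero_comp]
      haveI := hpepi i
      have hse : (ShortComplex.mk (kernel.ι (d i)) (p i) hw).ShortExact := by
        refine ⟨(ShortComplex.mk (kernel.ι (d i)) (p i) hw).exact_of_f_is_kernel ?_⟩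
        refine KernelFork.IsLimit.ofι' _ _ (fun {W} k hk => ?_)
        have hk2 : k ≫ p i = 0 := hk
        have hk' : k ≫ d i = 0 := by
          calc k ≫ d i = (k ≫ p i) ≫ kernel.ι (d (i + 1)) := by
                rw [Category.assoc, hpι]
            _ = 0 := by rw [hk2, zero_comp]
        exact ⟨kernel.lift (d i) k hk', kernel.lift_ι _ _ _⟩
      exact mem_of_shortExact T E' hE' (kernel.ι (d i)) (p i) hw hse
        (hE'.1 _ (hinjJ i)) hZ (hliftp i)
  -- conclude for `X` itself using the sequence `0 → X → Jo 0 → kernel (d 1) → 0`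
  have hZ1 : kernel (d 1) ∈ E' := aux n 1 (by omega)
  have hw : ι ≫ p 0 = 0 := by
    rw [← cancel_mono (kernel.ι (d 1)), Category.assoc, hpι, w0, zero_comp]
  haveI := hpepi 0
  have hse : (ShortComplex.mk ι (p 0) hw).ShortExact := by
    refine ⟨(ShortComplex.mk ι (p 0) hw).exact_of_f_is_kernel ?_⟩
    refine KernelFork.IsLimit.ofι' _ _ (fun {W} k hk => ?_)
    have hk2 : k ≫ p 0 = 0 := hk
    have hk' : k ≫ d 0 = 0 := by
      calc k ≫ d 0 = (k ≫ p 0) ≫ kernel.ι (d 1) := by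
            rw [Category.assoc, hpι]
        _ = 0 := by rw [hk2, zero_comp]
    exact KernelFork.IsLimit.lift' hex0.fIsKernel k hk'
  exact mem_of_shortExact T E' hE' ι (p 0) hw hse (hE'.1 _ (hinjJ 0)) hZ1 (hliftp 0)
end
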